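/- arXiv:1203.0884 — 7 statements merged into one kernel-verified Lean document; each statement's English description precedes it below -/
import Mathlib

section
/- Let n be a positive integer and ℓ a positive integer. The set S_{n,ℓ} of 2×2 real matrices P(x,y) = [[y, ℓx],[x, y]] with x = a√r, y = b√s for integers a, b and positive integers r, s with rs = n, satisfying y² − ℓx² = ±1, is a commutative subgroup of GL(2,ℝ). -/
lemma aux_sq_of_gcd {u v n : ℕ} (hu : 0 < u) (h : u * v = n ^ 2) :
    ∃ p q : ℕ, u = Nat.gcd u v * p ^ 2 ∧ v = Nat.gcd u v * q ^ 2 := by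
  have hg0 : 0 < Nat.gcd u v := Nat.gcd_pos_of_pos_left _ hu
  rcases Nat.exists_coprime' hg0 with ⟨g, u', v', hgpos, co, rfl, rfl⟩
  have hgcd : Nat.gcd (u' * g) (v' * g) = g := by
    rw [Nat.gcd_mul_right, Nat.Coprime.gcd_eq_one co, one_mul]
  have h' : g ^ 2 * (u' * v') = n ^ 2 := by rw [← h]; ring
  have hgn : g ∣ n := by
    rw [← Nat.pow_dvd_pow_iff (two_ne_zero), ← h']
    exact Dvd.intro _ rfl
  obtain ⟨k, hk⟩ := hgn
  have hkk : u' * v' = k ^ 2 := by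
    refine Nat.eq_of_mul_eq_mul_left (pow_pos hgpos 2) ?_
    rw [h', hk]; ring
  have hunit : IsUnit (gcd u' v') := by
    rw [Nat.isUnit_iff]; exact co
  obtain ⟨p, hp⟩ := exists_eq_pow_of_mul_eq_pow (α := ℕ) hunit hkk
  obtain ⟨q, hq⟩ := exists_eq_pow_of_mul_eq_pow (α := ℕ)
    (by rwa [gcd_comm] at hunit) (by rwa [mul_comm] at hkk)
  exact ⟨p, q, by rw [hgcd, hp, mul_comm], by rw [hgcd, hq, mul_comm]⟩

lemma aux_gcd_sq (a b : ℕ) : Nat.gcd (a ^ 2) (b ^ 2) = Nat.gcd a b ^ 2 := by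
  rcases Nat.eq_zero_or_pos (Nat.gcd a b) with h | h
  · rw [Nat.gcd_eq_zero_iff] at h
    simp [h.1, h.2]
  rcases Nat.exists_coprime' h with ⟨g, a', b', hgpos, co, rfl, rfl⟩
  rw [mul_pow, mul_pow, Nat.gcd_mul_right, Nat.gcd_mul_right,
    Nat.Coprime.gcd_eq_one (co.pow 2 2), Nat.Coprime.gcd_eq_one co, one_mul, one_mul]

lemma aux_gcd_mul_gcd {r1 s1 r2 s2 n : ℕ} (h1 : r1 * s1 = n) (h2 : r2 * s2 = n) :
    Nat.gcd (r1 * s2) (r2 * s1) * Nat.gcd (s1 * s2) (r1 * r2)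
      = n * Nat.gcd (Nat.gcd s2 r1) (Nat.gcd s1 r2) ^ 2 := by
  have e1 : r1 * s2 * (s1 * s2) = n * s2 ^ 2 := by rw [← h1]; ring
  have e2 : r1 * s2 * (r1 * r2) = n * r1 ^ 2 := by rw [← h2]; ring
  have e3 : r2 * s1 * (s1 * s2) = n * s1 ^ 2 := by rw [← h2]; ring
  have e4 : r2 * s1 * (r1 * r2) = n * r2 ^ 2 := by rw [← h1]; ring
  rw [← Nat.gcd_mul_right, ← Nat.gcd_mul_left (r1 * s2), ← Nat.gcd_mul_left (r2 * s1),
    e1, e2, e3, e4, Nat.gcd_mul_left, Nat.gcd_mul_left, Nat.gcd_mul_left,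
    aux_gcd_sq, aux_gcd_sq, aux_gcd_sq]

lemma aux_sqrt {r s d p : ℕ} (h : r * s = d * p ^ 2) :
    Real.sqrt r * Real.sqrt s = p * Real.sqrt d := by
  rw [← Real.sqrt_mul (by positivity), ← Nat.cast_mul, h, Nat.cast_mul,
    Real.sqrt_mul (by positivity), Nat.cast_pow, Real.sqrt_sq (by positivity)]
  ring

lemma aux_sqrt' {e d g : ℕ} (h : e = d * g ^ 2) :
    Real.sqrt e = g * Real.sqrt d := by
  rw [h, Nat.cast_mul, Real.sqrt_mul (by positivity), Nat.cast_pow,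
    Real.sqrt_sq (by positivity)]
  ring

lemma Pmul (l x1 y1 x2 y2 : ℝ) :
    !![y1, l * x1; x1, y1] * !![y2, l * x2; x2, y2] =
      !![y1 * y2 + l * (x1 * x2), l * (x1 * y2 + y1 * x2);
         x1 * y2 + y1 * x2, y1 * y2 + l * (x1 * x2)] := by
  ext i j
  fin_cases i <;> fin_cases j <;>
    simp [Matrix.mul_apply, Fin.sum_univ_two] <;> ring

/-- The set `S_{n,ℓ}` of matrices `P(x,y) = [[y, ℓx],[x, y]]` with `x = a√r`, `y = b√s`,
`a, b ∈ ℤ`, `r, s ∈ ℤ_{>0}`, `rs = n`, and `y² − ℓx² = ±1`. -/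
def Sset (n ℓ : ℕ) : Set (Matrix (Fin 2) (Fin 2) ℝ) :=
  {M | ∃ (a b : ℤ) (r s : ℕ), 0 < r ∧ 0 < s ∧ r * s = n ∧
    M = !![(b : ℝ) * Real.sqrt s, (ℓ : ℝ) * ((a : ℝ) * Real.sqrt r);
           (a : ℝ) * Real.sqrt r, (b : ℝ) * Real.sqrt s] ∧
    (((b : ℝ) * Real.sqrt s) ^ 2 - (ℓ : ℝ) * ((a : ℝ) * Real.sqrt r) ^ 2 = 1 ∨
     ((b : ℝ) * Real.sqrt s) ^ 2 - (ℓ : ℝ) * ((a : ℝ) * Real.sqrt r) ^ 2 = -1)}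

/-- `S_{n,ℓ}` is a commutative subgroup of `GL(2,ℝ)`: it contains the
identity, is closed under multiplication, consists of invertible matrices and is
closed under taking inverses, and any two of its members commute. -/
theorem Sset_comm_subgroup (n ℓ : ℕ) (hn : 0 < n) (hℓ : 0 < ℓ) :
    (1 ∈ Sset n ℓ) ∧
    (∀ M ∈ Sset n ℓ, ∀ N ∈ Sset n ℓ, M * N ∈ Sset n ℓ) ∧
    (∀ M ∈ Sset n ℓ, IsUnit M ∧ M⁻¹ ∈ Sset n ℓ) ∧
    (∀ M ∈ Sset n ℓ, ∀ N ∈ Sset n ℓ, M * N = N * M) := by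
  refine ⟨?_, ?_, ?_, ?_⟩
  · -- identity
    refine ⟨0, 1, n, 1, hn, one_pos, mul_one n, ?_, Or.inl (by norm_num)⟩
    ext i j
    fin_cases i <;> fin_cases j <;> norm_num [Matrix.one_apply]
  · -- closure under multiplication
    rintro M ⟨a1, b1, r1, s1, hr1, hs1, hrs1, rfl, hdet1⟩
      N ⟨a2, b2, r2, s2, hr2, hs2, hrs2, rfl, hdet2⟩
    have huv : (r1 * s2) * (r2 * s1) = n ^ 2 := by
      rw [show (r1 * s2) * (r2 * s1) = (r1 * s1) * (r2 * s2) by ring, hrs1, hrs2, sq]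
    have hwz : (s1 * s2) * (r1 * r2) = n ^ 2 := by
      rw [show (s1 * s2) * (r1 * r2) = (r1 * s1) * (r2 * s2) by ring, hrs1, hrs2, sq]
    obtain ⟨p, q, hp, hq⟩ := aux_sq_of_gcd (Nat.mul_pos hr1 hs2) huv
    obtain ⟨p', q', hp', hq'⟩ := aux_sq_of_gcd (Nat.mul_pos hs1 hs2) hwz
    have hde := aux_gcd_mul_gcd hrs1 hrs2
    have hdn : Nat.gcd (r1 * s2) (r2 * s1) ∣ n := by
      rw [← Nat.pow_dvd_pow_iff (two_ne_zero), ← huv, pow_two]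
      exact mul_dvd_mul (Nat.gcd_dvd_left _ _) (Nat.gcd_dvd_right _ _)
    set d := Nat.gcd (r1 * s2) (r2 * s1) with hd_def
    set e := Nat.gcd (s1 * s2) (r1 * r2) with he_def
    set g := Nat.gcd (Nat.gcd s2 r1) (Nat.gcd s1 r2) with hg_def
    have hd0 : 0 < d := Nat.gcd_pos_of_pos_left _ (Nat.mul_pos hr1 hs2)
    set s := n / d with hs_def
    have hds : d * s = n := Nat.mul_div_cancel' hdn
    have hs0 : 0 < s := by
      rcases Nat.eq_zero_or_pos s with h | h
      · rw [h, mul_zero] at hds; omega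
      · exact h
    have hes : e = s * g ^ 2 := by
      refine Nat.eq_of_mul_eq_mul_left hd0 ?_
      rw [hde, ← hds]; ring
    -- real square-root facts
    have hx1 : Real.sqrt r1 * Real.sqrt s2 = p * Real.sqrt d := aux_sqrt hp
    have hx2 : Real.sqrt s1 * Real.sqrt r2 = q * Real.sqrt d := by
      rw [mul_comm]; exact aux_sqrt hq
    have hy1 : Real.sqrt s1 * Real.sqrt s2 = p' * Real.sqrt e := aux_sqrt hp'
    have hy2 : Real.sqrt r1 * Real.sqrt r2 = q' * Real.sqrt e := aux_sqrt hq'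
    have hse : Real.sqrt e = g * Real.sqrt s := aux_sqrt' hes
    set A : ℤ := a1 * b2 * p + b1 * a2 * q with hA
    set B : ℤ := (b1 * b2 * p' + (ℓ : ℤ) * (a1 * a2) * q') * g with hB
    have hX : (a1 : ℝ) * Real.sqrt r1 * ((b2 : ℝ) * Real.sqrt s2)
        + (b1 : ℝ) * Real.sqrt s1 * ((a2 : ℝ) * Real.sqrt r2)
        = (A : ℝ) * Real.sqrt d := by
      push_cast [hA]
      calc (a1 : ℝ) * Real.sqrt r1 * ((b2 : ℝ) * Real.sqrt s2)
            + (b1 : ℝ) * Real.sqrt s1 * ((a2 : ℝ) * Real.sqrt r2)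
          = (a1 : ℝ) * b2 * (Real.sqrt r1 * Real.sqrt s2)
            + (b1 : ℝ) * a2 * (Real.sqrt s1 * Real.sqrt r2) := by ring
        _ = _ := by rw [hx1, hx2]; ring
    have hY : (b1 : ℝ) * Real.sqrt s1 * ((b2 : ℝ) * Real.sqrt s2)
        + (ℓ : ℝ) * ((a1 : ℝ) * Real.sqrt r1 * ((a2 : ℝ) * Real.sqrt r2))
        = (B : ℝ) * Real.sqrt s := by
      push_cast [hB]
      calc (b1 : ℝ) * Real.sqrt s1 * ((b2 : ℝ) * Real.sqrt s2)
            + (ℓ : ℝ) * ((a1 : ℝ) * Real.sqrt r1 * ((a2 : ℝ) * Real.sqrt r2))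
          = (b1 : ℝ) * b2 * (Real.sqrt s1 * Real.sqrt s2)
            + (ℓ : ℝ) * (a1 * a2) * (Real.sqrt r1 * Real.sqrt r2) := by ring
        _ = _ := by rw [hy1, hy2, hse]; ring
    refine ⟨A, B, d, s, hd0, hs0, hds, ?_, ?_⟩
    · rw [Pmul, hX, hY]
    · rw [← hX, ← hY]
      have key : ((b1 : ℝ) * Real.sqrt s1 * ((b2 : ℝ) * Real.sqrt s2)
            + (ℓ : ℝ) * ((a1 : ℝ) * Real.sqrt r1 * ((a2 : ℝ) * Real.sqrt r2))) ^ 2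
          - (ℓ : ℝ) * ((a1 : ℝ) * Real.sqrt r1 * ((b2 : ℝ) * Real.sqrt s2)
            + (b1 : ℝ) * Real.sqrt s1 * ((a2 : ℝ) * Real.sqrt r2)) ^ 2
          = (((b1 : ℝ) * Real.sqrt s1) ^ 2 - (ℓ : ℝ) * ((a1 : ℝ) * Real.sqrt r1) ^ 2)
            * (((b2 : ℝ) * Real.sqrt s2) ^ 2 - (ℓ : ℝ) * ((a2 : ℝ) * Real.sqrt r2) ^ 2) := by
        ring
      rcases hdet1 with h1 | h1 <;> rcases hdet2 with h2 | h2 <;>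
        rw [key, h1, h2] <;> norm_num
  · -- inverses
    rintro M ⟨a, b, r, s, hr, hs, hrs, rfl, hdet⟩
    rcases hdet with hdet | hdet
    · have e1 : (b : ℝ) * Real.sqrt s * ((b : ℝ) * Real.sqrt s)
          + (ℓ : ℝ) * ((a : ℝ) * Real.sqrt r * (((-a : ℤ) : ℝ) * Real.sqrt r)) = 1 := by
        push_cast
        linear_combination hdet
      have e2 : (a : ℝ) * Real.sqrt r * ((b : ℝ) * Real.sqrt s)
          + (b : ℝ) * Real.sqrt s * (((-a : ℤ) : ℝ) * Real.sqrt r) = 0 := by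
        push_cast; ring
      have hMN : !![(b : ℝ) * Real.sqrt s, (ℓ : ℝ) * ((a : ℝ) * Real.sqrt r);
            (a : ℝ) * Real.sqrt r, (b : ℝ) * Real.sqrt s] *
          !![(b : ℝ) * Real.sqrt s, (ℓ : ℝ) * (((-a : ℤ) : ℝ) * Real.sqrt r);
            ((-a : ℤ) : ℝ) * Real.sqrt r, (b : ℝ) * Real.sqrt s] = 1 := by
        rw [Pmul, e1, e2, mul_zero, Matrix.one_fin_two]
      have hNM := mul_eq_one_comm.mp hMN
      refine ⟨⟨⟨_, _, hMN, hNM⟩, rfl⟩, ?_⟩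
      rw [Matrix.inv_eq_right_inv hMN]
      refine ⟨-a, b, r, s, hr, hs, hrs, rfl, Or.inl ?_⟩
      push_cast
      linear_combination hdet
    · have e1 : (b : ℝ) * Real.sqrt s * (((-b : ℤ) : ℝ) * Real.sqrt s)
          + (ℓ : ℝ) * ((a : ℝ) * Real.sqrt r * ((a : ℝ) * Real.sqrt r)) = 1 := by
        push_cast
        linear_combination -hdet
      have e2 : (a : ℝ) * Real.sqrt r * (((-b : ℤ) : ℝ) * Real.sqrt s)
          + (b : ℝ) * Real.sqrt s * ((a : ℝ) * Real.sqrt r) = 0 := by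
        push_cast; ring
      have hMN : !![(b : ℝ) * Real.sqrt s, (ℓ : ℝ) * ((a : ℝ) * Real.sqrt r);
            (a : ℝ) * Real.sqrt r, (b : ℝ) * Real.sqrt s] *
          !![((-b : ℤ) : ℝ) * Real.sqrt s, (ℓ : ℝ) * ((a : ℝ) * Real.sqrt r);
            (a : ℝ) * Real.sqrt r, ((-b : ℤ) : ℝ) * Real.sqrt s] = 1 := by
        rw [Pmul, e1, e2, mul_zero, Matrix.one_fin_two]
      have hNM := mul_eq_one_comm.mp hMN
      refine ⟨⟨⟨_, _, hMN, hNM⟩, rfl⟩, ?_⟩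
      rw [Matrix.inv_eq_right_inv hMN]
      refine ⟨a, -b, r, s, hr, hs, hrs, rfl, Or.inr ?_⟩
      push_cast
      linear_combination hdet
  · -- commutativity
    rintro M ⟨a1, b1, r1, s1, hr1, hs1, hrs1, rfl, hdet1⟩
      N ⟨a2, b2, r2, s2, hr2, hs2, hrs2, rfl, hdet2⟩
    ext i j
    fin_cases i <;> fin_cases j <;>
      simp [Matrix.mul_apply, Fin.sum_univ_two] <;> ring
end

section
/- Let n, ℓ be positive integers with ℓ > 1 and √(ℓn) ∉ ℤ. Then the group S_{n,ℓ} is isomorphic to ℤ ⊕ ℤ/2ℤ. -/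
open Real

theorem abs_le_of_abs_sq_sub_sq_eq_one {y z : ℝ} (h : |y ^ 2 - z ^ 2| = 1) (hyz : 1 < y + z) :
    |y| ≤ y + z ∧ |z| ≤ y + z := by
  have hw : |y - z| * (y + z) = 1 := by
    rw [← abs_of_pos (zero_lt_one.trans hyz), ← abs_mul, ← h]; ring_nf
  have hw' : |y - z| < y + z := by nlinarith [abs_nonneg (y - z)]
  obtain ⟨h₁, h₂⟩ := abs_lt.1 hw'
  exact ⟨abs_le.2 ⟨by linarith, by linarith⟩, abs_le.2 ⟨by linarith, by linarith⟩⟩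

theorem abs_le_abs_mul_sqrt (a : ℝ) {r : ℝ} (hr : 1 ≤ r) : |a| ≤ |a * √r| := by
  rw [abs_mul, abs_of_nonneg (sqrt_nonneg r)]
  exact le_mul_of_one_le_right (abs_nonneg a) (one_le_sqrt.2 hr)

section UnitsReal

variable {H : Subgroup ℝˣ} {ε : ℝˣ}

theorem exists_zpow_eq_of_forall_le (hε : 1 < (ε : ℝ)) (hεH : ε ∈ H)
    (hmin : ∀ u ∈ H, 1 < (u : ℝ) → (ε : ℝ) ≤ u) {u : ℝˣ} (hu : u ∈ H) (hpos : 0 < (u : ℝ)) :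
    ∃ k : ℤ, ε ^ k = u := by
  obtain ⟨k, hk, hk'⟩ := exists_mem_Ico_zpow hpos hε
  refine ⟨k, (eq_of_div_eq_one ?_).symm⟩
  have hεk : 0 < (ε : ℝ) ^ k := zpow_pos (zero_lt_one.trans hε) k
  have hmem : u / ε ^ k ∈ H := div_mem hu (zpow_mem hεH k)
  have hval : ((u / ε ^ k : ℝˣ) : ℝ) = u / (ε : ℝ) ^ k := by push_cast; rfl
  by_contra hne
  have h1 : 1 < ((u / ε ^ k : ℝˣ) : ℝ) := by
    refine lt_of_le_of_ne ?_ fun h => hne (Units.ext h.symm)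
    rw [hval, one_le_div hεk]; exact hk
  have := hmin _ hmem h1
  rw [hval, le_div_iff₀ hεk, ← zpow_one_add₀ (zero_lt_one.trans hε).ne', add_comm] at this
  linarith

noncomputable def signZPowHom (ε : ℝˣ) : Multiplicative (ℤ × ZMod 2) →* ℝˣ where
  toFun p := (-1) ^ p.toAdd.2.val * ε ^ p.toAdd.1
  map_one' := by simp
  map_mul' p q := by
    simp only [toAdd_mul, Prod.fst_add, Prod.snd_add, ZMod.val_add, zpow_add]
    rw [← pow_eq_pow_mod _ (neg_one_sq (R := ℝˣ)), pow_add, mul_mul_mul_comm]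

theorem signZPowHom_injective (hε : 1 < (ε : ℝ)) : Function.Injective (signZPowHom ε) := by
  refine (injective_iff_map_eq_one _).2 fun p hp => ?_
  obtain ⟨⟨k, j⟩, rfl⟩ := Multiplicative.ofAdd.surjective p
  have hval := congrArg Units.val hp
  have hεk : 0 < (ε : ℝ) ^ k := zpow_pos (zero_lt_one.trans hε) k
  fin_cases j
  · have hk : (ε : ℝ) ^ k = (ε : ℝ) ^ (0 : ℤ) := by simpa [signZPowHom, ZMod.val] using hval
    rw [zpow_right_injective₀ (zero_lt_one.trans hε) hε.ne' hk]
    rfl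
  · simp [signZPowHom, ZMod.val] at hval
    linarith

theorem range_signZPowHom (hε : 1 < (ε : ℝ)) (hεH : ε ∈ H)
    (hmin : ∀ u ∈ H, 1 < (u : ℝ) → (ε : ℝ) ≤ u) (hneg : -1 ∈ H) :
    (signZPowHom ε).range = H := by
  apply le_antisymm
  · rintro _ ⟨p, rfl⟩
    exact mul_mem (pow_mem hneg _) (zpow_mem hεH _)
  · intro u hu
    rcases (Units.ne_zero u).lt_or_gt with hneg' | hpos
    · obtain ⟨k, hk⟩ := exists_zpow_eq_of_forall_le hε hεH hmin
        (by simpa using mul_mem hneg hu) (by rw [Units.val_neg]; linarith)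
      refine ⟨Multiplicative.ofAdd (k, 1), ?_⟩
      change (-1) ^ (1 : ZMod 2).val * ε ^ k = u
      rw [ZMod.val_one, hk, pow_one, neg_one_mul, neg_neg]
    · obtain ⟨k, hk⟩ := exists_zpow_eq_of_forall_le hε hεH hmin hu hpos
      exact ⟨Multiplicative.ofAdd (k, 0), by simp [signZPowHom, hk]⟩

theorem Subgroup.nonempty_mulEquiv_int_prod_zmod_two (hneg : -1 ∈ H)
    (hbig : ∃ u ∈ H, 1 < (u : ℝ))
    (hfin : ∀ C : ℝ, {u : ℝˣ | u ∈ H ∧ 1 < (u : ℝ) ∧ (u : ℝ) ≤ C}.Finite) :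
    Nonempty (H ≃* Multiplicative (ℤ × ZMod 2)) := by
  obtain ⟨u₀, hu₀H, hu₀⟩ := hbig
  obtain ⟨ε, ⟨hεH, hε, -⟩, hmin₀⟩ :=
    Set.exists_min_image _ ((↑) : ℝˣ → ℝ) (hfin u₀) ⟨u₀, hu₀H, hu₀, le_rfl⟩
  have hmin : ∀ u ∈ H, 1 < (u : ℝ) → (ε : ℝ) ≤ u := fun u hu h1 =>
    (le_total (u : ℝ) u₀).elim (fun hle => hmin₀ u ⟨hu, h1, hle⟩)
      fun hge => (hmin₀ u₀ ⟨hu₀H, hu₀, le_rfl⟩).trans hge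
  exact ⟨((MonoidHom.ofInjective (signZPowHom_injective hε)).trans
    (MulEquiv.subgroupCongr (range_signZPowHom hε hεH hmin hneg))).symm⟩

end UnitsReal

def pMat (ℓ x y : ℝ) : Matrix (Fin 2) (Fin 2) ℝ := !![y, ℓ * x; x, y]

theorem det_pMat (ℓ x y : ℝ) : (pMat ℓ x y).det = y ^ 2 - ℓ * x ^ 2 := by
  rw [pMat, Matrix.det_fin_two_of]; ring

section PMatHom

variable {ℓ : ℝ} {G : Subgroup (GL (Fin 2) ℝ)}

/-- The paper's `φ : P(x, y) ↦ y + x √ℓ`. -/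
noncomputable def pMatHom (hℓ : 0 ≤ ℓ)
    (hG : ∀ g ∈ G, ∃ x y, (g : Matrix (Fin 2) (Fin 2) ℝ) = pMat ℓ x y) : G →* ℝˣ :=
  MonoidHom.toHomUnits
    { toFun g :=
        ((g : GL (Fin 2) ℝ) : Matrix (Fin 2) (Fin 2) ℝ) 1 1 +
          ((g : GL (Fin 2) ℝ) : Matrix (Fin 2) (Fin 2) ℝ) 1 0 * √ℓ
      map_one' := by simp
      map_mul' g h := by
        obtain ⟨x, y, hg⟩ := hG g g.2
        obtain ⟨x', y', hh⟩ := hG h h.2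
        simp only [Subgroup.coe_mul, Units.val_mul, hg, hh, pMat, Matrix.mul_fin_two]
        simp only [Matrix.of_apply, Matrix.cons_val', Matrix.cons_val_zero, Matrix.cons_val_one,
          Matrix.empty_val', Matrix.cons_val_fin_one]
        linear_combination -(x * x') * Real.sq_sqrt hℓ }

theorem pMatHom_apply {hℓ : 0 ≤ ℓ}
    {hG : ∀ g ∈ G, ∃ x y, (g : Matrix (Fin 2) (Fin 2) ℝ) = pMat ℓ x y}
    {g : G} {x y : ℝ} (hg : ((g : GL (Fin 2) ℝ) : Matrix (Fin 2) (Fin 2) ℝ) = pMat ℓ x y) :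
    (pMatHom hℓ hG g : ℝ) = y + x * √ℓ := by
  simp [pMatHom, hg, pMat]

end PMatHom

namespace Sset

variable {n ℓ : ℕ} {G : Subgroup (GL (Fin 2) ℝ)}

theorem exists_eq_pMat {M : Matrix (Fin 2) (Fin 2) ℝ} (hM : M ∈ Sset n ℓ) :
    ∃ x y, M = pMat ℓ x y := by
  obtain ⟨a, b, r, s, -, -, -, rfl, -⟩ := hM
  exact ⟨_, _, rfl⟩

noncomputable abbrev unitsHom
    (hG : ∀ g : GL (Fin 2) ℝ, g ∈ G ↔ (g : Matrix (Fin 2) (Fin 2) ℝ) ∈ Sset n ℓ) : G →* ℝˣ :=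
  pMatHom (Nat.cast_nonneg ℓ) fun g hg => exists_eq_pMat ((hG g).1 hg)

theorem exists_coe_eq_pMat
    (hG : ∀ g : GL (Fin 2) ℝ, g ∈ G ↔ (g : Matrix (Fin 2) (Fin 2) ℝ) ∈ Sset n ℓ)
    {a b : ℤ} {r s : ℕ} (hr : 0 < r) (hs : 0 < s) (hrs : r * s = n)
    (hdet : ((b : ℝ) * √s) ^ 2 - ℓ * ((a : ℝ) * √r) ^ 2 = 1 ∨
      ((b : ℝ) * √s) ^ 2 - ℓ * ((a : ℝ) * √r) ^ 2 = -1) :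
    ∃ g : G, ((g : GL (Fin 2) ℝ) : Matrix (Fin 2) (Fin 2) ℝ) = pMat ℓ (a * √r) (b * √s) := by
  have hM : (pMat ℓ (a * √r) (b * √s)).det ≠ 0 := by
    rw [det_pMat]; rcases hdet with h | h <;> rw [h] <;> norm_num
  exact ⟨⟨.mkOfDetNeZero _ hM, (hG _).2 ⟨a, b, r, s, hr, hs, hrs, rfl, hdet⟩⟩, rfl⟩

variable (hG : ∀ g : GL (Fin 2) ℝ, g ∈ G ↔ (g : Matrix (Fin 2) (Fin 2) ℝ) ∈ Sset n ℓ)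

theorem neg_one_mem_range (hn : 0 < n) : -1 ∈ (unitsHom hG).range := by
  obtain ⟨g, hg⟩ := exists_coe_eq_pMat hG (a := 0) (b := -1) hn one_pos (mul_one n)
    (Or.inl (by simp))
  exact ⟨g, Units.ext (by simp [pMatHom_apply hg])⟩

theorem exists_one_lt_mem_range (hirr : ¬∃ m : ℕ, m * m = ℓ * n) :
    ∃ u ∈ (unitsHom hG).range, 1 < (u : ℝ) := by
  have hd : 0 < ℓ * n := Nat.pos_of_ne_zero fun h => hirr ⟨0, h.symm⟩
  have hsq : ¬IsSquare ((ℓ * n : ℕ) : ℤ) := by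
    rw [Int.isSquare_natCast_iff]; rintro ⟨m, hm⟩; exact hirr ⟨m, hm.symm⟩
  obtain ⟨sol, hx, hy⟩ := Pell.Solution₁.exists_pos_of_not_isSquare (by exact_mod_cast hd) hsq
  have hpell : ((sol.x : ℝ) * √(1 : ℕ)) ^ 2 - ℓ * ((sol.y : ℝ) * √n) ^ 2 = 1 := by
    have := congrArg (Int.cast : ℤ → ℝ) sol.prop
    push_cast at this
    rw [Nat.cast_one, sqrt_one, mul_one, mul_pow, sq_sqrt (Nat.cast_nonneg n)]
    linear_combination this
  obtain ⟨g, hg⟩ := exists_coe_eq_pMat hG (Nat.pos_of_mul_pos_left hd) one_pos (mul_one n)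
    (Or.inl hpell)
  refine ⟨_, ⟨g, rfl⟩, ?_⟩
  rw [pMatHom_apply hg, Nat.cast_one, sqrt_one, mul_one]
  have : (0 : ℝ) ≤ sol.y * √n * √ℓ := by positivity
  have : (1 : ℝ) < sol.x := by exact_mod_cast hx
  linarith

theorem unitsHom_injective (hℓ : 1 < ℓ) : Function.Injective (unitsHom hG) := by
  refine (injective_iff_map_eq_one _).2 fun g hg => ?_
  obtain ⟨a, b, r, s, -, -, -, hgM, hdet⟩ := (hG g).1 g.2
  change _ = pMat ℓ _ _ at hgM
  have hval : (b : ℝ) * √s + a * √r * √ℓ = 1 := by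
    rw [← pMatHom_apply hgM]; exact congrArg Units.val hg
  have hconj : (b : ℝ) * √s - a * √r * √ℓ = (b * √s) ^ 2 - ℓ * (a * √r) ^ 2 := by
    linear_combination
      (-(b * √s - a * √r * √ℓ)) * hval - (a * √r) ^ 2 * sq_sqrt (Nat.cast_nonneg ℓ)
  rcases hdet with hdet | hdet
  · have ha : (a : ℝ) * √r = 0 :=
      (mul_eq_zero.1 (by linarith : (a : ℝ) * √r * √ℓ = 0)).resolve_right
        (sqrt_pos.2 (by exact_mod_cast zero_lt_one.trans hℓ)).ne'
    have hb : (b : ℝ) * √s = 1 := by linarith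
    refine Subtype.ext (Units.ext ?_)
    rw [hgM, ha, hb]
    simp [pMat, Matrix.one_fin_two]
  · have h1 : ((a ^ 2 * r * ℓ : ℤ) : ℝ) = 1 := by
      have h := congrArg (· ^ 2) (by linarith : (a : ℝ) * √r * √ℓ = 1)
      simp only [mul_pow, one_pow, sq_sqrt (Nat.cast_nonneg _)] at h
      exact_mod_cast h
    have h2 : (ℓ : ℤ) = 1 :=
      Int.eq_one_of_mul_eq_one_left (by positivity) (by exact_mod_cast h1)
    omega

theorem finite_range_one_lt_le (hℓ : 1 ≤ ℓ) (C : ℝ) :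
    {u : ℝˣ | u ∈ (unitsHom hG).range ∧ 1 < (u : ℝ) ∧ (u : ℝ) ≤ C}.Finite := by
  set N := ⌈C⌉
  have hN : ∀ c : ℤ, |(c : ℝ)| ≤ C → c ∈ Set.Icc (-N) N := fun c hc =>
    abs_le.1 (by exact_mod_cast hc.trans (Int.le_ceil C))
  have hfin := ((Set.finite_Icc (-N) N).prod <| (Set.finite_Icc (-N) N).prod <|
    (Set.finite_Iic n).prod (Set.finite_Iic n)).image
      fun q : ℤ × ℤ × ℕ × ℕ => (q.2.1 : ℝ) * √q.2.2.2 + q.1 * √q.2.2.1 * √ℓ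
  refine (hfin.preimage Units.val_injective.injOn).subset ?_
  rintro _ ⟨⟨g, rfl⟩, h1, hC⟩
  obtain ⟨a, b, r, s, hr, hs, hrs, hgM, hdet⟩ := (hG g).1 g.2
  change _ = pMat ℓ _ _ at hgM
  rw [pMatHom_apply hgM] at h1 hC
  have hnorm : |((b : ℝ) * √s) ^ 2 - (a * √r * √ℓ) ^ 2| = 1 := by
    rw [mul_pow _ √ℓ, sq_sqrt (Nat.cast_nonneg ℓ), mul_comm _ (ℓ : ℝ)]
    exact (abs_eq zero_le_one).2 hdet
  obtain ⟨hy, hz⟩ := abs_le_of_abs_sq_sub_sq_eq_one hnorm h1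
  refine ⟨(a, b, r, s), ⟨hN a ?_, hN b ?_, ?_, ?_⟩, (pMatHom_apply hgM).symm⟩
  · calc |(a : ℝ)| ≤ |a * √r| := abs_le_abs_mul_sqrt _ (by exact_mod_cast hr)
      _ ≤ |a * √r * √ℓ| := abs_le_abs_mul_sqrt _ (by exact_mod_cast hℓ)
      _ ≤ C := hz.trans hC
  · exact (abs_le_abs_mul_sqrt _ (by exact_mod_cast hs)).trans (hy.trans hC)
  · exact hrs ▸ Nat.le_mul_of_pos_right r hs
  · exact hrs ▸ Nat.le_mul_of_pos_left s hr

end Sset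

/-- for `ℓ > 1` and `√(ℓn) ∉ ℤ` (i.e. `ℓn` is not a perfect square),
the group `S_{n,ℓ}` is isomorphic to `ℤ ⊕ ℤ/2ℤ` (multiplicatively). -/
theorem Snl_iso_int_prod_zmod2 (n ℓ : ℕ) (hn : 0 < n) (hℓ : 1 < ℓ)
    (hirr : ¬∃ m : ℕ, m * m = ℓ * n)
    (G : Subgroup (GL (Fin 2) ℝ))
    (hG : ∀ g : GL (Fin 2) ℝ, g ∈ G ↔ (g : Matrix (Fin 2) (Fin 2) ℝ) ∈ Sset n ℓ) :
    Nonempty (G ≃* Multiplicative (ℤ × ZMod 2)) := by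
  obtain ⟨e⟩ := Subgroup.nonempty_mulEquiv_int_prod_zmod_two (Sset.neg_one_mem_range hG hn)
    (Sset.exists_one_lt_mem_range hG hirr) (Sset.finite_range_one_lt_le hG hℓ.le)
  exact ⟨(MonoidHom.ofInjective (Sset.unitsHom_injective hG hℓ)).trans e⟩
end

section
/- Let X be an abelian surface with NS(X) = ℤH and (H²)/2 = n, and let ℓ be a positive integer with √(ℓn) ∉ ℤ. Identify Mukai vectors (r, dH, a) with matrices [[r, d√n],[d√n, a]]. Then for two positive isotropic Mukai vectors w₀, w₁, the conditions (1,0,−ℓ) = ±(ℓw₀ − w₁) and ⟨w₀,w₁⟩ = −1 hold if and only if there exist p, q with P(p,q) ∈ S_{n,ℓ} such that w₀ = (p², −(pq/√n)H, q²) and w₁ = (q², −(ℓpq/√n)H, ℓ²p²). -/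
/-- A Mukai vector `(r, dH, a)` on an abelian surface with `NS(X) = ℤH`, `(H²)/2 = n`
is encoded as a triple `(r, d, a) ∈ ℤ³`.  The Mukai pairing is
`⟨x, y⟩ = 2n x₁ y₁ − x₀ y₂ − x₂ y₀`. -/
def mukaiPairing (n : ℕ) (x y : ℤ × ℤ × ℤ) : ℤ :=
  2 * n * x.2.1 * y.2.1 - x.1 * y.2.2 - x.2.2 * y.1

/-- A Mukai vector is isotropic if `⟨v, v⟩ = 0`. -/
def MukaiIsotropic (n : ℕ) (v : ℤ × ℤ × ℤ) : Prop := mukaiPairing n v v = 0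

/-- Positivity of a Mukai vector `(r, dH, a)`. -/
def MukaiPos (v : ℤ × ℤ × ℤ) : Prop :=
  0 < v.1 ∨ (v.1 = 0 ∧ 0 < v.2.1) ∨ (v.1 = 0 ∧ v.2.1 = 0 ∧ 0 < v.2.2)

/-!
Write `w₀ = (R, D, A)`. The vector condition together with `⟨w₀, w₁⟩ = -1` forces
`w₁ = (A, ℓD, ℓ²R)` and `A - ℓR = ±1`, after which the remaining Mukai conditions reduce to
`R, A ≥ 0` and `RA = nD²`. As `A - ℓR = ±1`, the factors `R` and `A` are coprime, so
`RA = nD²` splits as `R = a²r`, `A = b²s`, `D = -ab` with `rs = n`; these are exactly the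
vectors coming from `P(p, q) ∈ S_{n,ℓ}` with `p = a√r`, `q = b√s`.
-/

theorem Nat.exists_eq_sq_mul_of_coprime {x y n d : ℕ} (hn : n ≠ 0) (hxy : x.Coprime y)
    (h : x * y = n * d ^ 2) :
    ∃ u w r s : ℕ, 0 < r ∧ 0 < s ∧ r * s = n ∧ x = u ^ 2 * r ∧ y = w ^ 2 * s ∧ u * w = d := by
  rcases Nat.eq_zero_or_pos x with rfl | hx
  · obtain rfl : y = 1 := Nat.coprime_zero_left y |>.mp hxy
    have hd : d = 0 := by simpa [hn] using h.symm
    exact ⟨0, 1, n, 1, Nat.pos_of_ne_zero hn, one_pos, mul_one n, by simp, by simp, by simp [hd]⟩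
  rcases Nat.eq_zero_or_pos y with rfl | hy
  · obtain rfl : x = 1 := Nat.coprime_zero_right x |>.mp hxy
    have hd : d = 0 := by simpa [hn] using h.symm
    exact ⟨1, 0, 1, n, one_pos, Nat.pos_of_ne_zero hn, one_mul n, by simp, by simp, by simp [hd]⟩
  have huw : x.gcd d * y.gcd d = d := by
    have hd : d ∣ x * y := h ▸ dvd_mul_of_dvd_right (dvd_pow_self d two_ne_zero) n
    rw [Nat.gcd_comm x, Nat.gcd_comm y, ← hxy.gcd_mul d, Nat.gcd_eq_left hd]
  have hd2 : d ^ 2 ∣ x * y := h ▸ dvd_mul_left _ n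
  obtain ⟨r, hr⟩ : x.gcd d ^ 2 ∣ x :=
    ((hxy.coprime_dvd_left (x.gcd_dvd_left d)).pow_left 2).dvd_of_dvd_mul_right
      ((pow_dvd_pow_of_dvd (x.gcd_dvd_right d) 2).trans hd2)
  obtain ⟨s, hs⟩ : y.gcd d ^ 2 ∣ y :=
    ((hxy.symm.coprime_dvd_left (y.gcd_dvd_left d)).pow_left 2).dvd_of_dvd_mul_left
      ((pow_dvd_pow_of_dvd (y.gcd_dvd_right d) 2).trans hd2)
  refine ⟨x.gcd d, y.gcd d, r, s, Nat.pos_of_mul_pos_left (hr ▸ hx),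
    Nat.pos_of_mul_pos_left (hs ▸ hy), ?_, hr, hs, huw⟩
  apply Nat.eq_of_mul_eq_mul_right (Nat.pos_of_mul_pos_left (h ▸ Nat.mul_pos hx hy))
  calc r * s * d ^ 2 = r * s * (x.gcd d * y.gcd d) ^ 2 := by rw [huw]
    _ = (x.gcd d ^ 2 * r) * (y.gcd d ^ 2 * s) := by ring
    _ = n * d ^ 2 := by rw [← hr, ← hs, h]

theorem Int.exists_eq_sq_mul_of_isCoprime {R A D : ℤ} {n : ℕ} (hn : n ≠ 0) (hR : 0 ≤ R)
    (hA : 0 ≤ A) (hRA : IsCoprime R A) (h : R * A = n * D ^ 2) :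
    ∃ (a b : ℤ) (r s : ℕ), 0 < r ∧ 0 < s ∧ r * s = n ∧
      R = a ^ 2 * r ∧ D = -(a * b) ∧ A = b ^ 2 * s := by
  lift R to ℕ using hR
  lift A to ℕ using hA
  have hcop : R.Coprime A := by
    rwa [Int.isCoprime_iff_gcd_eq_one, Int.gcd_natCast_natCast] at hRA
  have h' : R * A = n * D.natAbs ^ 2 := by
    zify
    rw [sq_abs, h]
  obtain ⟨u, w, r, s, hr, hs, hrs, rfl, rfl, huw⟩ :=
    Nat.exists_eq_sq_mul_of_coprime hn hcop h'
  rcases Int.natAbs_eq D with hD | hD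
  · exact ⟨-u, w, r, s, hr, hs, hrs, by push_cast; ring, by rw [hD, ← huw]; push_cast; ring,
      by push_cast; ring⟩
  · exact ⟨u, w, r, s, hr, hs, hrs, by push_cast; ring, by rw [hD, ← huw]; push_cast; ring,
      by push_cast; ring⟩

theorem isCoprime_of_isUnit_sub_mul {R A : ℤ} (k : ℤ) (h : IsUnit (A - k * R)) :
    IsCoprime R A := by
  obtain ⟨u, hu⟩ := h
  exact ⟨-(↑u⁻¹ * k), ↑u⁻¹, by linear_combination (↑u⁻¹ : ℤ) * hu.symm + u.inv_mul⟩

theorem mukaiIsotropic_iff {n : ℕ} {R D A : ℤ} :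
    MukaiIsotropic n (R, D, A) ↔ R * A = n * D ^ 2 := by
  unfold MukaiIsotropic mukaiPairing
  constructor <;> intro h <;> linarith

theorem mukaiPos_iff_of_isotropic {n : ℕ} (hn : 0 < n) {R D A : ℤ} (h : R * A = n * D ^ 2) :
    MukaiPos (R, D, A) ↔ 0 ≤ R ∧ 0 ≤ A ∧ (R ≠ 0 ∨ A ≠ 0) := by
  have hD : R = 0 ∨ A = 0 → D = 0 := by
    rintro (rfl | rfl) <;> simpa [hn.ne'] using h.symm
  unfold MukaiPos
  constructor
  · rintro (hR | ⟨rfl, hD'⟩ | ⟨rfl, -, hA⟩)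
    · exact ⟨hR.le, nonneg_of_mul_nonneg_right (h ▸ by positivity) hR, Or.inl hR.ne'⟩
    · exact absurd (hD (Or.inl rfl)) hD'.ne'
    · exact ⟨le_rfl, hA.le, Or.inr hA.ne'⟩
  · rintro ⟨hR, hA, hRA⟩
    rcases hR.lt_or_eq with hR | rfl
    · exact Or.inl hR
    · have hA' : A ≠ 0 := hRA.resolve_left (by simp)
      exact Or.inr (Or.inr ⟨rfl, hD (Or.inl rfl), lt_of_le_of_ne hA hA'.symm⟩)

theorem isUnit_and_eq_of_mukaiPairing_eq_neg_one {n ℓ : ℕ} {R D A : ℤ} {w₁ : ℤ × ℤ × ℤ}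
    (hiso : R * A = n * D ^ 2) (hpair : mukaiPairing n (R, D, A) w₁ = -1)
    (hvec : ((1, 0, -(ℓ : ℤ)) : ℤ × ℤ × ℤ) = (ℓ : ℤ) • (R, D, A) - w₁ ∨
      ((1, 0, -(ℓ : ℤ)) : ℤ × ℤ × ℤ) = -((ℓ : ℤ) • (R, D, A) - w₁)) :
    IsUnit (A - ℓ * R) ∧ w₁ = (A, ℓ * D, ℓ ^ 2 * R) := by
  obtain ⟨R₁, D₁, A₁⟩ := w₁
  unfold mukaiPairing at hpair
  simp only [Prod.smul_mk, smul_eq_mul, Prod.mk_sub_mk, Prod.neg_mk, Prod.mk.injEq] at hvec hpair ⊢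
  rcases hvec with ⟨hR₁, hD₁, hA₁⟩ | ⟨hR₁, hD₁, hA₁⟩
  · have hE : A - ℓ * R = -1 := by
      linear_combination hpair + 2 * ℓ * hiso - 2 * n * D * hD₁ + R * hA₁ + A * hR₁
    exact ⟨hE ▸ isUnit_one.neg, by linear_combination hR₁ - hE, by linear_combination hD₁,
      by linear_combination hA₁ + ℓ * hE⟩
  · have hE : A - ℓ * R = 1 := by
      linear_combination -hpair - 2 * ℓ * hiso - 2 * n * D * hD₁ + R * hA₁ + A * hR₁
    exact ⟨hE ▸ isUnit_one, by linear_combination -hR₁ - hE, by linear_combination -hD₁,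
      by linear_combination -hA₁ + ℓ * hE⟩

theorem mukai_conditions_iff {n ℓ : ℕ} (hn : 0 < n) {R D A : ℤ} {w₁ : ℤ × ℤ × ℤ} :
    (MukaiPos (R, D, A) ∧ MukaiPos w₁ ∧ MukaiIsotropic n (R, D, A) ∧ MukaiIsotropic n w₁ ∧
      mukaiPairing n (R, D, A) w₁ = -1 ∧
      (((1, 0, -(ℓ : ℤ)) : ℤ × ℤ × ℤ) = (ℓ : ℤ) • (R, D, A) - w₁ ∨
       ((1, 0, -(ℓ : ℤ)) : ℤ × ℤ × ℤ) = -((ℓ : ℤ) • (R, D, A) - w₁))) ↔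
    0 ≤ R ∧ 0 ≤ A ∧ R * A = n * D ^ 2 ∧ IsUnit (A - ℓ * R) ∧ w₁ = (A, ℓ * D, ℓ ^ 2 * R) := by
  constructor
  · rintro ⟨hpos, -, hiso, -, hpair, hvec⟩
    rw [mukaiIsotropic_iff] at hiso
    obtain ⟨hR, hA, -⟩ := (mukaiPos_iff_of_isotropic hn hiso).1 hpos
    exact ⟨hR, hA, hiso, isUnit_and_eq_of_mukaiPairing_eq_neg_one hiso hpair hvec⟩
  · rintro ⟨hR, hA, hiso, hu, rfl⟩
    have hsq := Int.isUnit_sq hu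
    have hiso₁ : A * (ℓ ^ 2 * R) = n * (ℓ * D) ^ 2 := by linear_combination (ℓ : ℤ) ^ 2 * hiso
    refine ⟨(mukaiPos_iff_of_isotropic hn hiso).2 ⟨hR, hA, not_and_or.1 ?_⟩,
      (mukaiPos_iff_of_isotropic hn hiso₁).2 ⟨hA, by positivity, not_and_or.1 ?_⟩,
      mukaiIsotropic_iff.2 hiso, mukaiIsotropic_iff.2 hiso₁, ?_, ?_⟩
    · rintro ⟨rfl, rfl⟩
      simp at hsq
    · rintro ⟨h₁, h₂⟩
      exact one_ne_zero (by linear_combination -hsq + (A - 2 * ℓ * R) * h₁ + R * h₂ : (1 : ℤ) = 0)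
    · unfold mukaiPairing
      linear_combination -hsq - 2 * ℓ * hiso
    · simp only [Prod.smul_mk, smul_eq_mul, Prod.mk_sub_mk, Prod.neg_mk, Prod.mk.injEq]
      rcases Int.isUnit_iff.1 hu with h | h
      · exact Or.inr ⟨by linear_combination -h, by ring, by linear_combination ℓ * h⟩
      · exact Or.inl ⟨by linear_combination h, by ring, by linear_combination -ℓ * h⟩

def IsIntegralSolution (n ℓ : ℕ) (w₀ w₁ : ℤ × ℤ × ℤ) : Prop :=
  ∃ (a b : ℤ) (r s : ℕ), 0 < r ∧ 0 < s ∧ r * s = n ∧ IsUnit (b ^ 2 * s - ℓ * (a ^ 2 * r)) ∧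
    w₀ = (a ^ 2 * r, -(a * b), b ^ 2 * s) ∧
    w₁ = (b ^ 2 * s, -(ℓ * (a * b)), ℓ ^ 2 * (a ^ 2 * r))

theorem isIntegralSolution_iff {n ℓ : ℕ} (hn : n ≠ 0) {R D A : ℤ} {w₁ : ℤ × ℤ × ℤ} :
    IsIntegralSolution n ℓ (R, D, A) w₁ ↔
      0 ≤ R ∧ 0 ≤ A ∧ R * A = n * D ^ 2 ∧ IsUnit (A - ℓ * R) ∧
        w₁ = (A, ℓ * D, ℓ ^ 2 * R) := by
  constructor
  · rintro ⟨a, b, r, s, -, -, rfl, hu, hw₀, rfl⟩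
    simp only [Prod.mk.injEq] at hw₀
    obtain ⟨rfl, rfl, rfl⟩ := hw₀
    exact ⟨by positivity, by positivity, by push_cast; ring, hu, by rw [mul_neg]⟩
  · rintro ⟨hR, hA, hiso, hu, rfl⟩
    obtain ⟨a, b, r, s, hr, hs, hrs, rfl, rfl, rfl⟩ :=
      Int.exists_eq_sq_mul_of_isCoprime hn hR hA (isCoprime_of_isUnit_sub_mul ℓ hu) hiso
    exact ⟨a, b, r, s, hr, hs, hrs, hu, rfl, by rw [mul_neg]⟩

theorem isUnit_iff_sq_mul_sqrt_sub {ℓ r s : ℕ} {a b : ℤ} :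
    IsUnit (b ^ 2 * s - ℓ * (a ^ 2 * r)) ↔
      ((b : ℝ) * √s) ^ 2 - ℓ * ((a : ℝ) * √r) ^ 2 = 1 ∨
        ((b : ℝ) * √s) ^ 2 - ℓ * ((a : ℝ) * √r) ^ 2 = -1 := by
  simp only [mul_pow, Real.sq_sqrt (Nat.cast_nonneg _), Int.isUnit_iff]
  norm_cast

theorem mem_Sset_iff {n ℓ : ℕ} {p q : ℝ} :
    !![q, (ℓ : ℝ) * p; p, q] ∈ Sset n ℓ ↔
      ∃ (a b : ℤ) (r s : ℕ), 0 < r ∧ 0 < s ∧ r * s = n ∧ p = a * √r ∧ q = b * √s ∧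
        IsUnit (b ^ 2 * s - ℓ * (a ^ 2 * r)) := by
  simp only [Sset, Set.mem_ofPred_eq, ← isUnit_iff_sq_mul_sqrt_sub]
  constructor
  · rintro ⟨a, b, r, s, hr, hs, hrs, hM, hu⟩
    exact ⟨a, b, r, s, hr, hs, hrs, by simpa using congrFun (congrFun hM 1) 0,
      by simpa using congrFun (congrFun hM 0) 0, hu⟩
  · rintro ⟨a, b, r, s, hr, hs, hrs, rfl, rfl, hu⟩
    exact ⟨a, b, r, s, hr, hs, hrs, rfl, hu⟩

theorem real_coords_eq_iff {n ℓ r s : ℕ} (hn : 0 < n) (hrs : r * s = n) (a b : ℤ)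
    (w₀ w₁ : ℤ × ℤ × ℤ) :
    ((w₀.1 : ℝ) = (a * √r) ^ 2 ∧ (w₀.2.1 : ℝ) = -((a * √r) * (b * √s)) / √n ∧
      (w₀.2.2 : ℝ) = (b * √s) ^ 2 ∧
      (w₁.1 : ℝ) = (b * √s) ^ 2 ∧ (w₁.2.1 : ℝ) = -((ℓ : ℝ) * ((a * √r) * (b * √s))) / √n ∧
      (w₁.2.2 : ℝ) = (ℓ : ℝ) ^ 2 * (a * √r) ^ 2) ↔
    w₀ = (a ^ 2 * r, -(a * b), b ^ 2 * s) ∧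
      w₁ = (b ^ 2 * s, -(ℓ * (a * b)), ℓ ^ 2 * (a ^ 2 * r)) := by
  have hp : ((a : ℝ) * √r) ^ 2 = a ^ 2 * r := by rw [mul_pow, Real.sq_sqrt (Nat.cast_nonneg _)]
  have hq : ((b : ℝ) * √s) ^ 2 = b ^ 2 * s := by rw [mul_pow, Real.sq_sqrt (Nat.cast_nonneg _)]
  have hpq : (a * √r) * (b * √s) / √n = (a : ℝ) * b := by
    have hsqrt : √(r : ℝ) * √s = √n := by
      rw [← Real.sqrt_mul (Nat.cast_nonneg _), ← Nat.cast_mul, hrs]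
    rw [mul_mul_mul_comm, hsqrt, mul_div_assoc, div_self (by positivity), mul_one]
  obtain ⟨R, D, A⟩ := w₀
  obtain ⟨R₁, D₁, A₁⟩ := w₁
  simp only [neg_div, mul_div_assoc, hp, hq, hpq, Prod.mk.injEq]
  norm_cast
  tauto

theorem exists_mem_Sset_iff {n ℓ : ℕ} (hn : 0 < n) (w₀ w₁ : ℤ × ℤ × ℤ) :
    (∃ p q : ℝ, !![q, (ℓ : ℝ) * p; p, q] ∈ Sset n ℓ ∧
      (w₀.1 : ℝ) = p ^ 2 ∧ (w₀.2.1 : ℝ) = -(p * q) / √n ∧ (w₀.2.2 : ℝ) = q ^ 2 ∧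
      (w₁.1 : ℝ) = q ^ 2 ∧ (w₁.2.1 : ℝ) = -((ℓ : ℝ) * (p * q)) / √n ∧
      (w₁.2.2 : ℝ) = (ℓ : ℝ) ^ 2 * p ^ 2) ↔ IsIntegralSolution n ℓ w₀ w₁ := by
  simp only [mem_Sset_iff]
  constructor
  · rintro ⟨-, -, ⟨a, b, r, s, hr, hs, hrs, rfl, rfl, hu⟩, hw⟩
    exact ⟨a, b, r, s, hr, hs, hrs, hu, (real_coords_eq_iff hn hrs a b w₀ w₁).1 hw⟩
  · rintro ⟨a, b, r, s, hr, hs, hrs, hu, hw⟩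
    exact ⟨_, _, ⟨a, b, r, s, hr, hs, hrs, rfl, rfl, hu⟩,
      (real_coords_eq_iff hn hrs a b w₀ w₁).2 hw⟩

theorem numerical_solution_iff_general (n ℓ : ℕ) (hn : 0 < n) (w₀ w₁ : ℤ × ℤ × ℤ) :
    (MukaiPos w₀ ∧ MukaiPos w₁ ∧ MukaiIsotropic n w₀ ∧ MukaiIsotropic n w₁ ∧
      mukaiPairing n w₀ w₁ = -1 ∧
      (((1, 0, -(ℓ : ℤ)) : ℤ × ℤ × ℤ) = (ℓ : ℤ) • w₀ - w₁ ∨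
       ((1, 0, -(ℓ : ℤ)) : ℤ × ℤ × ℤ) = -((ℓ : ℤ) • w₀ - w₁)))
    ↔
    (∃ p q : ℝ, !![q, (ℓ : ℝ) * p; p, q] ∈ Sset n ℓ ∧
      (w₀.1 : ℝ) = p ^ 2 ∧ (w₀.2.1 : ℝ) = -(p * q) / Real.sqrt n ∧
      (w₀.2.2 : ℝ) = q ^ 2 ∧
      (w₁.1 : ℝ) = q ^ 2 ∧ (w₁.2.1 : ℝ) = -((ℓ : ℝ) * (p * q)) / Real.sqrt n ∧
      (w₁.2.2 : ℝ) = (ℓ : ℝ) ^ 2 * p ^ 2) := by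
  obtain ⟨R, D, A⟩ := w₀
  rw [mukai_conditions_iff hn, exists_mem_Sset_iff hn, isIntegralSolution_iff hn.ne']

/-- for positive isotropic Mukai vectors `w₀, w₁`, the conditions
`(1,0,−ℓ) = ±(ℓw₀ − w₁)` and `⟨w₀, w₁⟩ = −1` hold if and only if there are `p, q`
with `P(p,q) ∈ S_{n,ℓ}` such that `w₀ = (p², −(pq/√n)H, q²)` and
`w₁ = (q², −(ℓpq/√n)H, ℓ²p²)`. -/
theorem numerical_solution_iff (n ℓ : ℕ) (hn : 0 < n) (hℓ : 0 < ℓ)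
    (hirr : ¬∃ m : ℕ, m * m = ℓ * n) (w₀ w₁ : ℤ × ℤ × ℤ) :
    (MukaiPos w₀ ∧ MukaiPos w₁ ∧ MukaiIsotropic n w₀ ∧ MukaiIsotropic n w₁ ∧
      mukaiPairing n w₀ w₁ = -1 ∧
      (((1, 0, -(ℓ : ℤ)) : ℤ × ℤ × ℤ) = (ℓ : ℤ) • w₀ - w₁ ∨
       ((1, 0, -(ℓ : ℤ)) : ℤ × ℤ × ℤ) = -((ℓ : ℤ) • w₀ - w₁)))
    ↔
    (∃ p q : ℝ, !![q, (ℓ : ℝ) * p; p, q] ∈ Sset n ℓ ∧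
      (w₀.1 : ℝ) = p ^ 2 ∧ (w₀.2.1 : ℝ) = -(p * q) / Real.sqrt n ∧
      (w₀.2.2 : ℝ) = q ^ 2 ∧
      (w₁.1 : ℝ) = q ^ 2 ∧ (w₁.2.1 : ℝ) = -((ℓ : ℝ) * (p * q)) / Real.sqrt n ∧
      (w₁.2.2 : ℝ) = (ℓ : ℝ) ^ 2 * p ^ 2) :=
  numerical_solution_iff_general n ℓ hn w₀ w₁
end

section
/- Let ℓ > 1, and let A_ℓ = [[q, ℓp],[p, q]] with p, q > 0 and ε = q² − ℓp² = −1. Define a_m, b_m by A_ℓ^m = [[b_m, ℓa_m],[a_m, b_m]]. Then for all positive integers k: b_{2k−1}/a_{2k−1} < ℓa_{2k}/b_{2k} < b_{2k+1}/a_{2k+1} < √ℓ < ℓa_{2k+1}/b_{2k+1} < b_{2k}/a_{2k} < ℓa_{2k−1}/b_{2k−1}, and both sequences b_m/a_m and ℓa_m/b_m converge to √ℓ as m → ∞. -/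
private lemma aux_conv1 (L W : ℝ) (hW : 1 < W) :
    L * (W - W⁻¹) / (W + W⁻¹) = L * (W ^ 2 - 1) / (W ^ 2 + 1) := by
  have hW0 : (0:ℝ) < W := by linarith
  have h2 : W + W⁻¹ ≠ 0 := by positivity
  have h3 : (W:ℝ) ^ 2 + 1 ≠ 0 := by positivity
  field_simp

private lemma aux_conv2 (L W : ℝ) (hW : 1 < W) :
    L * (W + W⁻¹) / (W - W⁻¹) = L * (W ^ 2 + 1) / (W ^ 2 - 1) := by
  have hW0 : (0:ℝ) < W := by linarith
  have hinv : W⁻¹ < 1 := by rw [inv_lt_one_iff₀]; right; exact hW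
  have e1 : W + W⁻¹ = (W ^ 2 + 1) / W := by field_simp
  have e2 : W - W⁻¹ = (W ^ 2 - 1) / W := by field_simp
  rw [e1, e2, mul_div_assoc, mul_div_assoc, div_div_div_cancel_right₀]
  exact hW0.ne'

private lemma aux_Fmono (L W1 W2 : ℝ) (hL : 0 < L) (h1 : 1 < W1) (h2 : W1 < W2) :
    L * (W1 ^ 2 - 1) / (W1 ^ 2 + 1) < L * (W2 ^ 2 - 1) / (W2 ^ 2 + 1) := by
  rw [div_lt_div_iff₀ (by positivity) (by positivity)]
  nlinarith [mul_pos (show (0:ℝ) < W2 - W1 by linarith) (show (0:ℝ) < W2 + W1 by linarith)]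

private lemma aux_Gmono (L W1 W2 : ℝ) (hL : 0 < L) (h1 : 1 < W1) (h2 : W1 < W2) :
    L * (W2 ^ 2 + 1) / (W2 ^ 2 - 1) < L * (W1 ^ 2 + 1) / (W1 ^ 2 - 1) := by
  rw [div_lt_div_iff₀ (by nlinarith) (by nlinarith)]
  nlinarith [mul_pos (show (0:ℝ) < W2 - W1 by linarith) (show (0:ℝ) < W2 + W1 by linarith)]

private lemma aux_Flt (L W : ℝ) (hL : 0 < L) (hW : 1 < W) :
    L * (W ^ 2 - 1) / (W ^ 2 + 1) < L := by
  rw [div_lt_iff₀ (by positivity)]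
  nlinarith

private lemma aux_Ggt (L W : ℝ) (hL : 0 < L) (hW : 1 < W) :
    L < L * (W ^ 2 + 1) / (W ^ 2 - 1) := by
  rw [lt_div_iff₀ (by nlinarith)]
  nlinarith

private lemma aux_r1 (L x y : ℝ) (hx : 0 < x) (hd : 0 < x - y) :
    L * (x + y) / (x - y) = L * (1 + y / x) / (1 - y / x) := by
  have h1 : (1:ℝ) - y / x = (x - y) / x := by field_simp
  have h2 : (1:ℝ) + y / x = (x + y) / x := by field_simp
  rw [h1, h2, mul_div_assoc, mul_div_assoc, div_div_div_cancel_right₀]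
  exact hx.ne'

private lemma aux_r2 (L x y : ℝ) (hx : 0 < x) (hs : 0 < x + y) :
    L * (x - y) / (x + y) = L * (1 - y / x) / (1 + y / x) := by
  have h1 : (1:ℝ) - y / x = (x - y) / x := by field_simp
  have h2 : (1:ℝ) + y / x = (x + y) / x := by field_simp
  rw [h1, h2, mul_div_assoc, mul_div_assoc, div_div_div_cancel_right₀]
  exact hx.ne'

/-- with `A_ℓ = [[q, ℓp],[p, q]]`, `p, q > 0`, `ε = q² − ℓp² = −1`, and
`A_ℓ^m = [[b_m, ℓa_m],[a_m, b_m]]`, for every positive integer `k` the chain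
`b_{2k−1}/a_{2k−1} < ℓa_{2k}/b_{2k} < b_{2k+1}/a_{2k+1} < √ℓ
  < ℓa_{2k+1}/b_{2k+1} < b_{2k}/a_{2k} < ℓa_{2k−1}/b_{2k−1}`
holds, and both `b_m/a_m` and `ℓa_m/b_m` converge to `√ℓ` as `m → ∞`. -/
theorem interlacing_and_limits (ℓ : ℕ) (hℓ : 1 < ℓ) (p q : ℝ) (hp : 0 < p) (hq : 0 < q)
    (hε : q ^ 2 - (ℓ : ℝ) * p ^ 2 = -1)
    (A : (Matrix (Fin 2) (Fin 2) ℝ)ˣ)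
    (hA : (A : Matrix (Fin 2) (Fin 2) ℝ) = !![q, (ℓ : ℝ) * p; p, q])
    (a b : ℤ → ℝ)
    (hab : ∀ m : ℤ, ((A ^ m : (Matrix (Fin 2) (Fin 2) ℝ)ˣ) : Matrix (Fin 2) (Fin 2) ℝ)
      = !![b m, (ℓ : ℝ) * a m; a m, b m]) :
    (∀ k : ℤ, 0 < k →
      b (2 * k - 1) / a (2 * k - 1) < (ℓ : ℝ) * a (2 * k) / b (2 * k) ∧
      (ℓ : ℝ) * a (2 * k) / b (2 * k) < b (2 * k + 1) / a (2 * k + 1) ∧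
      b (2 * k + 1) / a (2 * k + 1) < Real.sqrt ℓ ∧
      Real.sqrt ℓ < (ℓ : ℝ) * a (2 * k + 1) / b (2 * k + 1) ∧
      (ℓ : ℝ) * a (2 * k + 1) / b (2 * k + 1) < b (2 * k) / a (2 * k) ∧
      b (2 * k) / a (2 * k) < (ℓ : ℝ) * a (2 * k - 1) / b (2 * k - 1)) ∧
    Filter.Tendsto (fun m : ℕ => b (m : ℤ) / a (m : ℤ)) Filter.atTop
      (nhds (Real.sqrt ℓ)) ∧
    Filter.Tendsto (fun m : ℕ => (ℓ : ℝ) * a (m : ℤ) / b (m : ℤ)) Filter.atTop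
      (nhds (Real.sqrt ℓ)) := by
  have hℓ1 : (1 : ℝ) < (ℓ : ℝ) := by exact_mod_cast hℓ
  set L := Real.sqrt (ℓ : ℝ) with hLdef
  have hL2 : L ^ 2 = (ℓ : ℝ) := Real.sq_sqrt (by positivity)
  have hL0 : 0 < L := Real.sqrt_pos.mpr (by linarith)
  have hL1 : 1 < L := by nlinarith
  set lam := q + p * L with hlamdef
  set mu := q - p * L with hmudef
  have hmul : lam * mu = -1 := by
    have : lam * mu = q ^ 2 - p ^ 2 * L ^ 2 := by ring
    rw [this, hL2]; linarith
  have hlam0 : 0 < lam := by positivity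
  have hmuneg : mu < 0 := by nlinarith [hmul, hlam0]
  have hlam1 : 1 < lam := by nlinarith
  have hmugt : -1 < mu := by nlinarith
  -- base case entries
  have h0 := hab 0
  rw [zpow_zero, Units.val_one] at h0
  have hb0 : b 0 = 1 := by
    have := congrFun (congrFun h0.symm 0) 0; simpa [Matrix.one_apply] using this
  have ha0 : a 0 = 0 := by
    have := congrFun (congrFun h0.symm 1) 0; simpa [Matrix.one_apply] using this
  -- recurrence
  have hrec : ∀ m : ℤ, b (m + 1) = b m * q + (ℓ : ℝ) * a m * p ∧
      a (m + 1) = a m * q + b m * p := by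
    intro m
    have h1 : ((A ^ (m + 1) : (Matrix (Fin 2) (Fin 2) ℝ)ˣ) : Matrix (Fin 2) (Fin 2) ℝ)
        = ((A ^ m : (Matrix (Fin 2) (Fin 2) ℝ)ˣ) : Matrix (Fin 2) (Fin 2) ℝ)
          * (A : Matrix (Fin 2) (Fin 2) ℝ) := by
      rw [zpow_add_one, Units.val_mul]
    rw [hab (m + 1), hab m, hA] at h1
    rw [show (!![b m, (ℓ:ℝ) * a m; a m, b m] * !![q, (ℓ:ℝ) * p; p, q]
        : Matrix (Fin 2) (Fin 2) ℝ)
      = !![b m * q + (ℓ:ℝ) * a m * p, b m * ((ℓ:ℝ)*p) + (ℓ:ℝ) * a m * q;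
          a m * q + b m * p, a m * ((ℓ:ℝ)*p) + b m * q] by
        ext i j; fin_cases i <;> fin_cases j <;>
          simp [Matrix.mul_apply, Fin.sum_univ_succ]] at h1
    constructor
    · have := congrFun (congrFun h1 0) 0; simpa using this
    · have := congrFun (congrFun h1 1) 0; simpa using this
  -- closed form
  have key : ∀ n : ℕ, b (n : ℤ) + L * a (n : ℤ) = lam ^ n ∧
      b (n : ℤ) - L * a (n : ℤ) = mu ^ n := by
    intro n
    induction n with
    | zero => simp [hb0, ha0]
    | succ n ih =>
      obtain ⟨ih1, ih2⟩ := ih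
      obtain ⟨hb, ha⟩ := hrec (n : ℤ)
      push_cast
      rw [pow_succ, pow_succ, ← ih1, ← ih2]
      constructor
      · rw [show ((n : ℤ) + 1) = ((n : ℤ) + 1) from rfl] at hb
        rw [hb, ha, hlamdef, ← hL2]; ring
      · rw [hb, ha, hmudef, ← hL2]; ring
  have hbform : ∀ n : ℕ, b (n : ℤ) = (lam ^ n + mu ^ n) / 2 := by
    intro n; obtain ⟨h1, h2⟩ := key n; linarith
  have haform : ∀ n : ℕ, a (n : ℤ) = (lam ^ n - mu ^ n) / (2 * L) := by
    intro n; obtain ⟨h1, h2⟩ := key n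
    field_simp; linarith
  -- bounds on powers
  have hmupow : ∀ n : ℕ, |mu ^ n| ≤ 1 := by
    intro n
    rw [abs_pow]
    exact pow_le_one₀ (abs_nonneg _) (abs_le.mpr ⟨le_of_lt hmugt, by linarith⟩)
  have hlampow : ∀ n : ℕ, 1 ≤ n → 1 < lam ^ n := fun n hn => one_lt_pow₀ hlam1 (by omega)
  have hdiff : ∀ n : ℕ, 1 ≤ n → 0 < lam ^ n - mu ^ n := by
    intro n hn
    have := hmupow n; have := hlampow n hn
    have := abs_le.mp (hmupow n)
    linarith
  have hsum : ∀ n : ℕ, 1 ≤ n → 0 < lam ^ n + mu ^ n := by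
    intro n hn
    have := hlampow n hn
    have := abs_le.mp (hmupow n)
    linarith
  have hapos : ∀ n : ℕ, 1 ≤ n → 0 < a (n : ℤ) := by
    intro n hn; rw [haform]; exact div_pos (hdiff n hn) (by positivity)
  have hbpos : ∀ n : ℕ, 1 ≤ n → 0 < b (n : ℤ) := by
    intro n hn; rw [hbform]; exact div_pos (hsum n hn) (by positivity)
  -- ratio formulas
  have hBA : ∀ n : ℕ, 1 ≤ n →
      b (n : ℤ) / a (n : ℤ) = L * (lam ^ n + mu ^ n) / (lam ^ n - mu ^ n) := by
    intro n hn
    rw [hbform, haform]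
    have h1 := hdiff n hn
    field_simp
  have hAB : ∀ n : ℕ, 1 ≤ n →
      (ℓ : ℝ) * a (n : ℤ) / b (n : ℤ) = L * (lam ^ n - mu ^ n) / (lam ^ n + mu ^ n) := by
    intro n hn
    rw [hbform, haform, ← hL2]
    have h1 := hsum n hn
    field_simp
  -- mu^n in terms of lam^n
  have hmuodd : ∀ n : ℕ, Odd n → mu ^ n = -(lam ^ n)⁻¹ := by
    intro n hn
    have h1 : lam ^ n * mu ^ n = -1 := by
      rw [← mul_pow, hmul, hn.neg_one_pow]
    have h2 : lam ^ n ≠ 0 := by positivity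
    field_simp at h1 ⊢
    linarith
  have hmueven : ∀ n : ℕ, Even n → mu ^ n = (lam ^ n)⁻¹ := by
    intro n hn
    have h1 : lam ^ n * mu ^ n = 1 := by
      rw [← mul_pow, hmul, hn.neg_one_pow]
    have h2 : lam ^ n ≠ 0 := by positivity
    field_simp at h1 ⊢
    linarith
  clear_value L lam mu
  refine ⟨?_, ?_, ?_⟩
  · -- interlacing chain
    intro k hk
    obtain ⟨j, rfl⟩ : ∃ j : ℕ, k = (j : ℤ) + 1 := by
      refine ⟨(k - 1).toNat, ?_⟩
      omega
    have e1 : (2 * ((j : ℤ) + 1) - 1) = ((2 * j + 1 : ℕ) : ℤ) := by push_cast; ring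
    have e2 : (2 * ((j : ℤ) + 1)) = ((2 * j + 2 : ℕ) : ℤ) := by push_cast; ring
    have e3 : (2 * ((j : ℤ) + 1) + 1) = ((2 * j + 3 : ℕ) : ℤ) := by push_cast; ring
    rw [e3, e1, e2]
    rw [hBA (2*j+1) (by omega), hAB (2*j+1) (by omega),
        hBA (2*j+2) (by omega), hAB (2*j+2) (by omega),
        hBA (2*j+3) (by omega), hAB (2*j+3) (by omega),
        hmuodd (2*j+1) ⟨j, by ring⟩, hmueven (2*j+2) ⟨j+1, by ring⟩,
        hmuodd (2*j+3) ⟨j+1, by ring⟩]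
    set X := lam ^ (2 * j + 1) with hXdef
    have hX1 : 1 < X := hlampow _ (by omega)
    have hX0 : 0 < X := by linarith
    have e4 : lam ^ (2 * j + 2) = X * lam := by rw [hXdef, ← pow_succ]
    have e5 : lam ^ (2 * j + 3) = X * lam ^ 2 := by rw [hXdef, ← pow_add]
    rw [e4, e5]
    have hXl : 1 < X * lam :=
      lt_of_lt_of_le hX1 (le_mul_of_one_le_right hX0.le hlam1.le)
    have hXl2 : 1 < X * lam ^ 2 :=
      lt_of_lt_of_le hX1 (le_mul_of_one_le_right hX0.le (one_le_pow₀ hlam1.le))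
    clear_value X
    -- normalize signs
    have s1 : X + -X⁻¹ = X - X⁻¹ := by ring
    have s2 : X - -X⁻¹ = X + X⁻¹ := by ring
    have s3 : X * lam ^ 2 + -(X * lam ^ 2)⁻¹ = X * lam ^ 2 - (X * lam ^ 2)⁻¹ := by ring
    have s4 : X * lam ^ 2 - -(X * lam ^ 2)⁻¹ = X * lam ^ 2 + (X * lam ^ 2)⁻¹ := by ring
    rw [s1, s2, s3, s4]
    rw [aux_conv1 L X hX1, aux_conv2 L X hX1, aux_conv1 L (X * lam) hXl,
        aux_conv2 L (X * lam) hXl, aux_conv1 L (X * lam ^ 2) hXl2,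
        aux_conv2 L (X * lam ^ 2) hXl2]
    have hlt1 : X < X * lam := lt_mul_of_one_lt_right hX0 hlam1
    have hlt2 : X * lam < X * lam ^ 2 := by
      have h : lam < lam ^ 2 := by nlinarith
      exact mul_lt_mul_of_pos_left h hX0
    exact ⟨aux_Fmono L X (X * lam) hL0 hX1 hlt1,
      aux_Fmono L (X * lam) (X * lam ^ 2) hL0 hXl hlt2,
      aux_Flt L _ hL0 hXl2, aux_Ggt L _ hL0 hXl2,
      aux_Gmono L (X * lam) (X * lam ^ 2) hL0 hXl hlt2,
      aux_Gmono L X (X * lam) hL0 hX1 hlt1⟩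
  · -- limit of b/a
    have hr : |mu / lam| < 1 := by
      rw [abs_div, abs_of_pos hlam0, div_lt_one hlam0, abs_lt]
      constructor <;> linarith
    have hrt : Filter.Tendsto (fun n : ℕ => (mu / lam) ^ n) Filter.atTop (nhds 0) :=
      tendsto_pow_atTop_nhds_zero_of_abs_lt_one hr
    have heq : ∀ n : ℕ, 1 ≤ n →
        b (n : ℤ) / a (n : ℤ) = L * (1 + (mu / lam) ^ n) / (1 - (mu / lam) ^ n) := by
      intro n hn
      rw [hBA n hn, div_pow, aux_r1 L _ _ (by positivity) (hdiff n hn)]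
    have t1 : Filter.Tendsto (fun n : ℕ => L * (1 + (mu / lam) ^ n) / (1 - (mu / lam) ^ n))
        Filter.atTop (nhds (L * (1 + 0) / (1 - 0))) :=
      Filter.Tendsto.div (tendsto_const_nhds.mul (tendsto_const_nhds.add hrt))
        (tendsto_const_nhds.sub hrt) (by norm_num)
    have : L * (1 + 0) / (1 - 0) = L := by norm_num
    rw [this] at t1
    refine t1.congr' ?_
    filter_upwards [Filter.eventually_ge_atTop 1] with n hn
    exact (heq n hn).symm
  · -- limit of ℓa/b
    have hr : |mu / lam| < 1 := by
      rw [abs_div, abs_of_pos hlam0, div_lt_one hlam0, abs_lt]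
      constructor <;> linarith
    have hrt : Filter.Tendsto (fun n : ℕ => (mu / lam) ^ n) Filter.atTop (nhds 0) :=
      tendsto_pow_atTop_nhds_zero_of_abs_lt_one hr
    have heq : ∀ n : ℕ, 1 ≤ n →
        (ℓ : ℝ) * a (n : ℤ) / b (n : ℤ) = L * (1 - (mu / lam) ^ n) / (1 + (mu / lam) ^ n) := by
      intro n hn
      rw [hAB n hn, div_pow, aux_r2 L _ _ (by positivity) (hsum n hn)]
    have t1 : Filter.Tendsto (fun n : ℕ => L * (1 - (mu / lam) ^ n) / (1 + (mu / lam) ^ n))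
        Filter.atTop (nhds (L * (1 - 0) / (1 + 0))) :=
      Filter.Tendsto.div (tendsto_const_nhds.mul (tendsto_const_nhds.sub hrt))
        (tendsto_const_nhds.add hrt) (by norm_num)
    have : L * (1 - 0) / (1 + 0) = L := by norm_num
    rw [this] at t1
    refine t1.congr' ?_
    filter_upwards [Filter.eventually_ge_atTop 1] with n hn
    exact (heq n hn).symm
end

section
/- Let X be a principally polarized abelian surface (n = 1) and v = (1, 0, −4). Suppose v₁ = (r, (1−2r)H, a−4+4r) with r > 0 defines a wall for v, i.e., ⟨v₁²⟩ ≥ 0, ⟨(v−v₁)²⟩ ≥ 0, ⟨v₁, v−v₁⟩ > 0, and the wall meets the region s < 0 away from s = −2 appropriately (encoded by a(8(2r−1)+a) > 0). Then v₁ = (1, −H, 1). Arithmetically: if r, a ∈ ℤ, r > 0, and setting 2m := ⟨v₁²⟩ with m = 1 − ra ∈ {0,1,2,3}, the conditions ra ∈ {1, 0, −1, −2}, a(a + 8(2r−1)) > 0, and 4 − 2m > a ≥ −m hold, then r = 1 and a = 1. -/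
/-- the arithmetic classification of walls for `v = (1,0,−4)` on a
principally polarized abelian surface: if `r > 0`, `m := 1 − ra ∈ {0,1,2,3}`
(equivalently `ra ∈ {1,0,−1,−2}`), `a(a + 8(2r−1)) > 0` and `4 − 2m > a ≥ −m`,
then `r = 1` and `a = 1` (so `v₁ = (1, −H, 1)` is the unique wall vector). -/
theorem unique_wall_ell4 (r a : ℤ) (hr : 0 < r)
    (hra : r * a = 1 ∨ r * a = 0 ∨ r * a = -1 ∨ r * a = -2)
    (hm : 0 ≤ 1 - r * a ∧ 1 - r * a ≤ 3)
    (ha : 0 < a * (a + 8 * (2 * r - 1)))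
    (hb : -(1 - r * a) ≤ a ∧ a < 4 - 2 * (1 - r * a)) :
    r = 1 ∧ a = 1 := by
  rcases hra with h | h | h | h
  · -- r * a = 1, r > 0 ⇒ r = 1, a = 1
    have hr1 : r ≤ 1 := Int.le_of_dvd one_pos ⟨a, h.symm⟩
    have hr1' : r = 1 := le_antisymm hr1 hr
    subst hr1'
    constructor
    · rfl
    · omega
  · -- r * a = 0 ⇒ a = 0, contradicting ha
    exfalso
    have ha0 : a = 0 := by
      rcases mul_eq_zero.mp h with h' | h'
      · omega
      · exact h'
    rw [ha0] at ha
    simp at ha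
  · -- r * a = -1 ⇒ r = 1, a = -1, contradicting ha
    exfalso
    have hr1 : r ≤ 1 := Int.le_of_dvd one_pos ⟨-a, by linarith⟩
    have hr1' : r = 1 := le_antisymm hr1 hr
    subst hr1'
    have ha1 : a = -1 := by omega
    rw [ha1] at ha
    norm_num at ha
  · -- r * a = -2 ⇒ from bounds a = -3, impossible
    exfalso
    rw [h] at hb
    have ha3 : a = -3 := by omega
    rw [ha3] at h
    omega
end

section
/- Let H² > 0 and let v have invariants (r, d_β, a_β) with r ≠ 0, and fix λ ∈ ℝ with rλ − d_β ≠ 0. Then the wall condition ℝZ_{(β+sH,tH)}(v) = ℝZ_{(β+sH,tH)}(e^{β+λH}) is equivalent to (s,t) lying on the circle C_{v,λ}: t² + (s−λ)(s − (λd_β − (2/(H²))a_β)/(rλ−d_β)) = 0. In particular C_{v,λ} passes through the two points (λ, 0) and ((λd_β − (2/(H²))a_β)/(rλ−d_β), 0) on the s-axis. -/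
/-- for `r ≠ 0` and `rλ − d_β ≠ 0`, the wall condition
`ℝZ_{(β+sH,tH)}(v) = ℝZ_{(β+sH,tH)}(e^{β+λH})` (for `t > 0`) is equivalent to the
circle `C_{v,λ} : t² + (s−λ)(s − μ) = 0` with `μ = (λd_β − (2/H²)a_β)/(rλ − d_β)`;
moreover `C_{v,λ}` passes through `(λ, 0)` and `(μ, 0)`.
Here `Re Z(v) = −ã_β(s) + t²(H²/2)r`, `Im Z(v) = (d_β − rs)·t·H²`, and
`e^{β+λH}` has invariants `(1, λ, (H²/2)λ²)`, with
`ã_β(s) = a_β − s d_β H² + s² r H²/2`. -/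
theorem wall_circle_Cvlam (H2 r dβ aβ lam : ℝ) (hH : 0 < H2) (hr : r ≠ 0)
    (hlam : r * lam - dβ ≠ 0) :
    (∀ s t : ℝ, 0 < t →
      ((-(aβ - s * dβ * H2 + s ^ 2 * r * H2 / 2) + t ^ 2 * H2 / 2 * r) *
          ((lam - s) * (t * H2))
        = (-(H2 / 2 * (lam - s) ^ 2) + t ^ 2 * H2 / 2 * 1) *
          ((dβ - r * s) * (t * H2))
      ↔ t ^ 2 + (s - lam) *
          (s - (lam * dβ - 2 / H2 * aβ) / (r * lam - dβ)) = 0)) ∧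
    ((0 : ℝ) ^ 2 + (lam - lam) *
        (lam - (lam * dβ - 2 / H2 * aβ) / (r * lam - dβ)) = 0) ∧
    ((0 : ℝ) ^ 2 + ((lam * dβ - 2 / H2 * aβ) / (r * lam - dβ) - lam) *
        ((lam * dβ - 2 / H2 * aβ) / (r * lam - dβ)
          - (lam * dβ - 2 / H2 * aβ) / (r * lam - dβ)) = 0) := by
  have hH' : H2 ≠ 0 := ne_of_gt hH
  refine ⟨fun s t ht => ?_, by ring, by ring⟩
  have key :
      ((-(aβ - s * dβ * H2 + s ^ 2 * r * H2 / 2) + t ^ 2 * H2 / 2 * r) *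
          ((lam - s) * (t * H2))
        - (-(H2 / 2 * (lam - s) ^ 2) + t ^ 2 * H2 / 2 * 1) *
          ((dβ - r * s) * (t * H2)))
      = (t * H2 * (H2 / 2) * (r * lam - dβ)) *
        (t ^ 2 + (s - lam) *
          (s - (lam * dβ - 2 / H2 * aβ) / (r * lam - dβ))) := by
    field_simp
    ring
  have hne : t * H2 * (H2 / 2) * (r * lam - dβ) ≠ 0 := by
    have := ne_of_gt ht
    positivity <;> try exact hlam
  constructor
  · intro h
    have : (t * H2 * (H2 / 2) * (r * lam - dβ)) *
        (t ^ 2 + (s - lam) *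
          (s - (lam * dβ - 2 / H2 * aβ) / (r * lam - dβ))) = 0 := by
      rw [← key]; linarith
    exact (mul_eq_zero.mp this).resolve_left hne
  · intro h
    have := key
    rw [h, mul_zero, sub_eq_zero] at this
    exact this
end

section
/- Let G be the group of 2×2 real matrices [[a√r, b√s],[c√s, d√r]] with a,b,c,d ∈ ℤ, r,s ∈ ℤ_{>0}, rs = n, adr − bcs = ±1, intersected with SL(2,ℝ). Define G_{n,ℓ} := {g ∈ Ĝ : ᵗg·[[1,0],[0,−ℓ]]·g = ±[[1,0],[0,−ℓ]]}. Then G_{n,ℓ} = S_{n,ℓ} ⋊ ⟨[[1,0],[0,−1]]⟩, i.e., every element of G_{n,ℓ} is uniquely a product of an element of S_{n,ℓ} and a power of [[1,0],[0,−1]], and [[1,0],[0,−1]] normalizes S_{n,ℓ}. -/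
/-- The group `Ĝ` of matrices `[[a√r, b√s],[c√s, d√r]]` with `a,b,c,d ∈ ℤ`,
`r, s ∈ ℤ_{>0}`, `rs = n`, `adr − bcs = ±1`. -/
def GhatSet (n : ℕ) : Set (Matrix (Fin 2) (Fin 2) ℝ) :=
  {M | ∃ (a b c d : ℤ) (r s : ℕ), 0 < r ∧ 0 < s ∧ r * s = n ∧
    M = !![(a : ℝ) * Real.sqrt r, (b : ℝ) * Real.sqrt s;
           (c : ℝ) * Real.sqrt s, (d : ℝ) * Real.sqrt r] ∧
    (a * d * r - b * c * s = 1 ∨ a * d * r - b * c * s = -1)}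

/-- `G_{n,ℓ} = {g ∈ Ĝ : ᵗg·[[1,0],[0,−ℓ]]·g = ±[[1,0],[0,−ℓ]]}`. -/
def Gnl (n ℓ : ℕ) : Set (Matrix (Fin 2) (Fin 2) ℝ) :=
  {g ∈ GhatSet n |
    g.transpose * !![(1 : ℝ), 0; 0, -(ℓ : ℝ)] * g = !![(1 : ℝ), 0; 0, -(ℓ : ℝ)] ∨
    g.transpose * !![(1 : ℝ), 0; 0, -(ℓ : ℝ)] * g = -(!![(1 : ℝ), 0; 0, -(ℓ : ℝ)])}

lemma myT (a b c d : ℝ) : !![a,b;c,d].transpose = !![a,c;b,d] := by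
  ext i j; fin_cases i <;> fin_cases j <;> simp

lemma myN (a b c d : ℝ) : -(!![a,b;c,d]) = !![-a,-b;-c,-d] := by
  ext i j; fin_cases i <;> fin_cases j <;> simp

lemma myE {a b c d e f g h : ℝ} (H : !![a,b;c,d] = !![e,f;g,h]) :
    a = e ∧ b = f ∧ c = g ∧ d = h := by
  rw [← Matrix.ext_iff] at H
  exact ⟨H 0 0, H 0 1, H 1 0, H 1 1⟩

lemma myM (a b c d e f g h : ℝ)
    (h1 : a = e) (h2 : b = f) (h3 : c = g) (h4 : d = h) :
    !![a,b;c,d] = !![e,f;g,h] := by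
  rw [h1,h2,h3,h4]

lemma cc1 (x y L e : ℝ) (h : y^2 - L*x^2 = e) :
    (!![y, L*x; x, y]).transpose * !![1,0;0,-L] * !![y, L*x; x, y]
      = !![e, 0; 0, -(L*e)] := by
  rw [myT, Matrix.mul_fin_two, Matrix.mul_fin_two]
  ext i j; fin_cases i <;> fin_cases j <;> simp <;>
    first | linear_combination h | linear_combination (-L)*h | ring

lemma cc2 (x y L e : ℝ) (h : y^2 - L*x^2 = e) :
    (!![y, -(L*x); x, -y]).transpose * !![1,0;0,-L] * !![y, -(L*x); x, -y]
      = !![e, 0; 0, -(L*e)] := by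
  rw [myT, Matrix.mul_fin_two, Matrix.mul_fin_two]
  ext i j; fin_cases i <;> fin_cases j <;> simp <;>
    first | linear_combination h | linear_combination (-L)*h | ring

/-- `G_{n,ℓ} = S_{n,ℓ} ⋊ ⟨Δ⟩` with `Δ = [[1,0],[0,−1]]`: every
element of `G_{n,ℓ}` is uniquely a product `m·Δ^i` with `m ∈ S_{n,ℓ}` and
`i ∈ {0,1}`, and `Δ` normalizes `S_{n,ℓ}`. -/
theorem Gnl_semidirect (n ℓ : ℕ) (hn : 0 < n) (hℓ : 0 < ℓ) :
    (∀ g : Matrix (Fin 2) (Fin 2) ℝ, g ∈ Gnl n ℓ ↔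
      ∃ m ∈ Sset n ℓ, g = m ∨ g = m * !![(1 : ℝ), 0; 0, -1]) ∧
    (∀ m₁ ∈ Sset n ℓ, ∀ m₂ ∈ Sset n ℓ, ∀ i₁ i₂ : Bool,
      m₁ * (if i₁ then !![(1 : ℝ), 0; 0, -1] else 1)
        = m₂ * (if i₂ then !![(1 : ℝ), 0; 0, -1] else 1) → m₁ = m₂ ∧ i₁ = i₂) ∧
    (∀ m ∈ Sset n ℓ,
      !![(1 : ℝ), 0; 0, -1] * m * !![(1 : ℝ), 0; 0, -1] ∈ Sset n ℓ) := by
  have hℓR : (0:ℝ) < (ℓ:ℝ) := by exact_mod_cast hℓ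
  refine ⟨?_, ?_, ?_⟩
  · -- part 1
    intro g
    constructor
    · rintro ⟨⟨a, b, c, d, r, s, hr, hs, hrs, hgf, hdet⟩, hcond⟩
      subst hgf
      rw [myT, Matrix.mul_fin_two, Matrix.mul_fin_two, myN] at hcond
      have hr0 : (0:ℝ) < Real.sqrt r := Real.sqrt_pos.mpr (by exact_mod_cast hr)
      have hs0 : (0:ℝ) < Real.sqrt s := Real.sqrt_pos.mpr (by exact_mod_cast hs)
      have hrr : Real.sqrt r * Real.sqrt r = (r:ℝ) := Real.mul_self_sqrt (by positivity)
      have hss : Real.sqrt s * Real.sqrt s = (s:ℝ) := Real.mul_self_sqrt (by positivity)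
      rcases hcond with H | H <;> obtain ⟨h00, h01, h10, h11⟩ := myE H <;>
        [(have h2Z : a*a*(r:ℤ) - (ℓ:ℤ)*(c*c)*(s:ℤ) = 1 := by
            have hcast : ((a*a*(r:ℤ) - (ℓ:ℤ)*(c*c)*(s:ℤ) : ℤ):ℝ) = ((1:ℤ):ℝ) := by
              push_cast
              linear_combination h00 - (a:ℝ)*(a:ℝ)*hrr + (ℓ:ℝ)*((c:ℝ)*(c:ℝ))*hss
            exact_mod_cast hcast);
         (have h2Z : a*a*(r:ℤ) - (ℓ:ℤ)*(c*c)*(s:ℤ) = -1 := by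
            have hcast : ((a*a*(r:ℤ) - (ℓ:ℤ)*(c*c)*(s:ℤ) : ℤ):ℝ) = ((-1:ℤ):ℝ) := by
              push_cast
              linear_combination h00 - (a:ℝ)*(a:ℝ)*hrr + (ℓ:ℝ)*((c:ℝ)*(c:ℝ))*hss
            exact_mod_cast hcast)] <;>
      · have hab : a*b = (ℓ:ℤ)*(c*d) := by
          have habR : ((a*b:ℤ):ℝ) * (Real.sqrt r * Real.sqrt s)
              = (((ℓ:ℤ)*(c*d):ℤ):ℝ) * (Real.sqrt r * Real.sqrt s) := by
            push_cast; linear_combination h01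
          exact_mod_cast mul_right_cancel₀ (ne_of_gt (mul_pos hr0 hs0)) habR
        rcases hdet with hf | hf
        all_goals
          first
          | -- σ = 1 case
            (have hd : d = a := by
               first
               | linear_combination (-d)*h2Z + a*hf + c*(s:ℤ)*hab
               | linear_combination d*h2Z - a*hf - c*(s:ℤ)*hab
             have hb : b = (ℓ:ℤ)*c := by
               first
               | linear_combination a*(r:ℤ)*hab - b*h2Z + (ℓ:ℤ)*c*hf
               | linear_combination -(a*(r:ℤ))*hab + b*h2Z - (ℓ:ℤ)*c*hf
             have hbR : (b:ℝ) = (ℓ:ℝ)*(c:ℝ) := by exact_mod_cast hb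
             have hdR : (d:ℝ) = (a:ℝ) := by exact_mod_cast hd
             refine ⟨!![(a:ℝ)*Real.sqrt r, (ℓ:ℝ)*((c:ℝ)*Real.sqrt s);
                        (c:ℝ)*Real.sqrt s, (a:ℝ)*Real.sqrt r],
               ⟨c, a, s, r, hs, hr, by rw [Nat.mul_comm]; exact hrs, rfl, ?_⟩,
               Or.inl ?_⟩
             · first
               | exact Or.inl (by linear_combination h00)
               | exact Or.inr (by linear_combination h00)
             · exact myM _ _ _ _ _ _ _ _ rfl (by rw [hbR]; ring) rfl (by rw [hdR]))
          | -- σ = -1 case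
            (have hd : d = -a := by
               first
               | linear_combination (-d)*h2Z + a*hf + c*(s:ℤ)*hab
               | linear_combination d*h2Z - a*hf - c*(s:ℤ)*hab
             have hb : b = -((ℓ:ℤ)*c) := by
               first
               | linear_combination a*(r:ℤ)*hab - b*h2Z + (ℓ:ℤ)*c*hf
               | linear_combination -(a*(r:ℤ))*hab + b*h2Z - (ℓ:ℤ)*c*hf
             have hbR : (b:ℝ) = -((ℓ:ℝ)*(c:ℝ)) := by exact_mod_cast hb
             have hdR : (d:ℝ) = -(a:ℝ) := by exact_mod_cast hd
             refine ⟨!![(a:ℝ)*Real.sqrt r, (ℓ:ℝ)*((c:ℝ)*Real.sqrt s);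
                        (c:ℝ)*Real.sqrt s, (a:ℝ)*Real.sqrt r],
               ⟨c, a, s, r, hs, hr, by rw [Nat.mul_comm]; exact hrs, rfl, ?_⟩,
               Or.inr ?_⟩
             · first
               | exact Or.inl (by linear_combination h00)
               | exact Or.inr (by linear_combination h00)
             · rw [Matrix.mul_fin_two]
               exact myM _ _ _ _ _ _ _ _ (by ring) (by rw [hbR]; ring)
                 (by ring) (by rw [hdR]; ring))
    · rintro ⟨m, ⟨A, B, R, S, hR, hS, hRS, hform, hε⟩, hg⟩
      subst hform
      have hRR : Real.sqrt R * Real.sqrt R = (R:ℝ) := Real.mul_self_sqrt (by positivity)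
      have hSS : Real.sqrt S * Real.sqrt S = (S:ℝ) := Real.mul_self_sqrt (by positivity)
      rcases hg with rfl | rfl
      · refine ⟨⟨B, (ℓ:ℤ)*A, A, B, S, R, hS, hR,
          by rw [Nat.mul_comm]; exact hRS, ?_, ?_⟩, ?_⟩
        · push_cast; exact myM _ _ _ _ _ _ _ _ (by ring) (by ring) (by ring) (by ring)
        · rcases hε with h | h
          · left
            have hcast : ((B*B*(S:ℤ) - ((ℓ:ℤ)*A)*A*(R:ℤ) : ℤ):ℝ) = ((1:ℤ):ℝ) := by
              push_cast
              linear_combination h - (B:ℝ)*(B:ℝ)*hSS + (ℓ:ℝ)*((A:ℝ)*(A:ℝ))*hRR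
            exact_mod_cast hcast
          · right
            have hcast : ((B*B*(S:ℤ) - ((ℓ:ℤ)*A)*A*(R:ℤ) : ℤ):ℝ) = ((-1:ℤ):ℝ) := by
              push_cast
              linear_combination h - (B:ℝ)*(B:ℝ)*hSS + (ℓ:ℝ)*((A:ℝ)*(A:ℝ))*hRR
            exact_mod_cast hcast
        · rcases hε with h | h
          · left
            rw [cc1 _ _ _ _ h]
            exact myM _ _ _ _ _ _ _ _ rfl rfl rfl (by ring)
          · right
            rw [cc1 _ _ _ _ h, myN]
            exact myM _ _ _ _ _ _ _ _ (by norm_num) (by norm_num) (by norm_num) (by ring)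
      · have hmd : !![(B:ℝ)*Real.sqrt S, (ℓ:ℝ)*((A:ℝ)*Real.sqrt R);
                      (A:ℝ)*Real.sqrt R, (B:ℝ)*Real.sqrt S] * !![(1:ℝ),0;0,-1]
            = !![(B:ℝ)*Real.sqrt S, -((ℓ:ℝ)*((A:ℝ)*Real.sqrt R));
                 (A:ℝ)*Real.sqrt R, -((B:ℝ)*Real.sqrt S)] := by
          rw [Matrix.mul_fin_two]
          exact myM _ _ _ _ _ _ _ _ (by ring) (by ring) (by ring) (by ring)
        rw [hmd]
        refine ⟨⟨B, -((ℓ:ℤ)*A), A, -B, S, R, hS, hR,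
          by rw [Nat.mul_comm]; exact hRS, ?_, ?_⟩, ?_⟩
        · push_cast; exact myM _ _ _ _ _ _ _ _ (by ring) (by ring) (by ring) (by ring)
        · rcases hε with h | h
          · right
            have hcast : ((B*(-B)*(S:ℤ) - (-((ℓ:ℤ)*A))*A*(R:ℤ) : ℤ):ℝ) = ((-1:ℤ):ℝ) := by
              push_cast
              linear_combination -h + (B:ℝ)*(B:ℝ)*hSS - (ℓ:ℝ)*((A:ℝ)*(A:ℝ))*hRR
            exact_mod_cast hcast
          · left
            have hcast : ((B*(-B)*(S:ℤ) - (-((ℓ:ℤ)*A))*A*(R:ℤ) : ℤ):ℝ) = ((1:ℤ):ℝ) := by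
              push_cast
              linear_combination -h + (B:ℝ)*(B:ℝ)*hSS - (ℓ:ℝ)*((A:ℝ)*(A:ℝ))*hRR
            exact_mod_cast hcast
        · rcases hε with h | h
          · left
            rw [cc2 _ _ _ _ h]
            exact myM _ _ _ _ _ _ _ _ rfl rfl rfl (by ring)
          · right
            rw [cc2 _ _ _ _ h, myN]
            exact myM _ _ _ _ _ _ _ _ (by norm_num) (by norm_num) (by norm_num) (by ring)
  · -- part 2 : uniqueness
    intro m₁ hm₁ m₂ hm₂ i₁ i₂ heq
    obtain ⟨a₁, b₁, r₁, s₁, hr₁, hs₁, hrs₁, hf₁, hε₁⟩ := hm₁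
    obtain ⟨a₂, b₂, r₂, s₂, hr₂, hs₂, hrs₂, hf₂, hε₂⟩ := hm₂
    have hΔΔ : (!![(1:ℝ),0;0,-1]) * !![(1:ℝ),0;0,-1] = 1 := by
      rw [Matrix.mul_fin_two, Matrix.one_fin_two]
      exact myM _ _ _ _ _ _ _ _ (by norm_num) (by norm_num) (by norm_num) (by norm_num)
    cases i₁ <;> cases i₂ <;> simp only [if_true, if_false, Bool.false_eq_true,
      Bool.true_eq_false, ite_true, ite_false, mul_one] at heq
    · exact ⟨heq, rfl⟩
    · -- i₁ = false, i₂ = true : m₁ = m₂ * Δ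
      exfalso
      subst hf₁; subst hf₂
      rw [Matrix.mul_fin_two] at heq
      obtain ⟨e1, e2, e3, e4⟩ := myE heq
      have hy2 : (b₂:ℝ)*Real.sqrt s₂ = 0 := by linarith [e1, e4]
      have hx2 : (a₂:ℝ)*Real.sqrt r₂ = 0 := by
        have h2 : (ℓ:ℝ) * ((a₂:ℝ)*Real.sqrt r₂) = 0 := by linear_combination e2/2 - (ℓ:ℝ)/2*e3
        rcases mul_eq_zero.mp h2 with h | h
        · exact absurd h (ne_of_gt hℓR)
        · exact h
      rcases hε₂ with h | h <;> rw [hx2, hy2] at h <;> norm_num at h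
    · -- i₁ = true, i₂ = false : m₁ * Δ = m₂
      exfalso
      subst hf₁; subst hf₂
      rw [Matrix.mul_fin_two] at heq
      obtain ⟨e1, e2, e3, e4⟩ := myE heq
      have hy1 : (b₁:ℝ)*Real.sqrt s₁ = 0 := by linear_combination e1/2 - e4/2
      have hx1 : (a₁:ℝ)*Real.sqrt r₁ = 0 := by
        have h2 : (ℓ:ℝ) * ((a₁:ℝ)*Real.sqrt r₁) = 0 := by linear_combination -e2/2 + (ℓ:ℝ)/2*e3
        rcases mul_eq_zero.mp h2 with h | h
        · exact absurd h (ne_of_gt hℓR)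
        · exact h
      rcases hε₁ with h | h <;> rw [hx1, hy1] at h <;> norm_num at h
    · -- both true
      have h2 : m₁ * (!![(1:ℝ),0;0,-1] * !![(1:ℝ),0;0,-1])
          = m₂ * (!![(1:ℝ),0;0,-1] * !![(1:ℝ),0;0,-1]) := by
        rw [← mul_assoc, ← mul_assoc, heq]
      rw [hΔΔ, mul_one, mul_one] at h2
      exact ⟨h2, rfl⟩
  · -- part 3 : normalizer
    intro m hm
    obtain ⟨a, b, r, s, hr, hs, hrs, hform, hε⟩ := hm
    subst hform
    refine ⟨-a, b, r, s, hr, hs, hrs, ?_, ?_⟩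
    · rw [Matrix.mul_fin_two, Matrix.mul_fin_two]
      push_cast
      exact myM _ _ _ _ _ _ _ _ (by ring) (by ring) (by ring) (by ring)
    · rcases hε with h | h
      · left; push_cast; linear_combination h
      · right; push_cast; linear_combination h
end
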